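/- arXiv:2405.18231 — 7 statements merged into one kernel-verified Lean document; each statement's English description precedes it below -/
import Mathlib

section
/- Let σ ⊆ ℝ^n be a closed convex cone with dual cone σ̌, and let τ be a face of σ. Then τ* := τ^⊥ ∩ σ̌ is a face of σ̌. -/
open Finset

/-- The dual cone of `σ ⊆ ℝⁿ` with respect to the standard pairing. -/
def dualCone {n : ℕ} (σ : Set (Fin n → ℝ)) : Set (Fin n → ℝ) :=
  {χ | ∀ x ∈ σ, 0 ≤ ∑ i, x i * χ i}

/-- `F` is a face of the convex cone `C`: a convex subcone which is extreme, i.e. closed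
under splitting sums of elements of `C`. -/
def IsFaceOf {n : ℕ} (F C : Set (Fin n → ℝ)) : Prop :=
  F ⊆ C ∧ Convex ℝ F ∧ (∀ c : ℝ, 0 < c → ∀ x ∈ F, c • x ∈ F) ∧
    ∀ x ∈ C, ∀ y ∈ C, x + y ∈ F → x ∈ F ∧ y ∈ F

/-- The dual face `τ* = τ^⊥ ∩ σ̌` of a face `τ` of `σ`. -/
def dualFace {n : ℕ} (σ τ : Set (Fin n → ℝ)) : Set (Fin n → ℝ) :=
  {χ ∈ dualCone σ | ∀ x ∈ τ, ∑ i, x i * χ i = 0}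

section

-- The pairing `∑ i, x i * χ i` of the definitions is `x ⬝ᵥ χ` unfolded, whence its linearity in `χ`.

variable {n : ℕ} {σ τ : Set (Fin n → ℝ)}

theorem mem_dualCone_iff {χ : Fin n → ℝ} : χ ∈ dualCone σ ↔ ∀ x ∈ σ, 0 ≤ x ⬝ᵥ χ := Iff.rfl

theorem mem_dualFace_iff {χ : Fin n → ℝ} :
    χ ∈ dualFace σ τ ↔ χ ∈ dualCone σ ∧ ∀ x ∈ τ, x ⬝ᵥ χ = 0 := Iff.rfl

theorem convex_dualFace : Convex ℝ (dualFace σ τ) := by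
  intro χ hχ ψ hψ a b ha hb _
  rw [mem_dualFace_iff, mem_dualCone_iff] at hχ hψ ⊢
  simp only [dotProduct_add, dotProduct_smul, smul_eq_mul]
  refine ⟨fun x hx => ?_, fun x hx => ?_⟩
  · have := hχ.1 x hx
    have := hψ.1 x hx
    positivity
  · rw [hχ.2 x hx, hψ.2 x hx, mul_zero, mul_zero, add_zero]

theorem smul_mem_dualFace {c : ℝ} (hc : 0 ≤ c) {χ : Fin n → ℝ} (hχ : χ ∈ dualFace σ τ) :
    c • χ ∈ dualFace σ τ := by
  rw [mem_dualFace_iff, mem_dualCone_iff] at hχ ⊢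
  simp only [dotProduct_smul, smul_eq_mul]
  exact ⟨fun x hx => mul_nonneg hc (hχ.1 x hx), fun x hx => by rw [hχ.2 x hx, mul_zero]⟩

/-- Two pairings that are nonnegative on `σ ⊇ τ` and sum to zero on `τ` both vanish on `τ`. -/
theorem mem_dualFace_of_add_mem (hτσ : τ ⊆ σ) {χ ψ : Fin n → ℝ} (hχ : χ ∈ dualCone σ)
    (hψ : ψ ∈ dualCone σ) (hsum : χ + ψ ∈ dualFace σ τ) :
    χ ∈ dualFace σ τ ∧ ψ ∈ dualFace σ τ := by
  rw [mem_dualCone_iff] at hχ hψ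
  simp only [mem_dualFace_iff] at hsum ⊢
  have hzero : ∀ x ∈ τ, x ⬝ᵥ χ = 0 ∧ x ⬝ᵥ ψ = 0 := fun x hx =>
    (add_eq_zero_iff_of_nonneg (hχ x (hτσ hx)) (hψ x (hτσ hx))).1
      (by rw [← dotProduct_add]; exact hsum.2 x hx)
  exact ⟨⟨hχ, fun x hx => (hzero x hx).1⟩, ⟨hψ, fun x hx => (hzero x hx).2⟩⟩

end

theorem dualFace_isFaceOf_dualCone_general
    {n : ℕ} (σ : Set (Fin n → ℝ))
    (τ : Set (Fin n → ℝ)) (hτ : IsFaceOf τ σ) :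
    IsFaceOf (dualFace σ τ) (dualCone σ) :=
  ⟨fun _ hχ => hχ.1, convex_dualFace, fun _ hc _ => smul_mem_dualFace hc.le,
    fun _ hχ _ hψ => mem_dualFace_of_add_mem hτ.1 hχ hψ⟩

/-- for a face `τ` of a closed convex cone `σ`, the set
`τ* = τ^⊥ ∩ σ̌` is a face of the dual cone `σ̌`. -/
theorem dualFace_isFaceOf_dualCone
    {n : ℕ} (σ : Set (Fin n → ℝ)) (hclosed : IsClosed σ) (hconv : Convex ℝ σ)
    (h0 : (0 : Fin n → ℝ) ∈ σ)
    (hcone : ∀ c : ℝ, 0 < c → ∀ x ∈ σ, c • x ∈ σ)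
    (τ : Set (Fin n → ℝ)) (hτ : IsFaceOf τ σ) :
    IsFaceOf (dualFace σ τ) (dualCone σ) :=
  dualFace_isFaceOf_dualCone_general σ τ hτ
end

section
/- Let L be a lattice (free finitely generated abelian group) with dual lattice L*, and let σ ⊆ L ⊗ ℝ be a rational polyhedral cone with dual cone σ̌ ⊆ L* ⊗ ℝ. Then a lattice element λ ∈ L satisfies ⟨λ, χ⟩ ≥ 0 for all χ ∈ σ̌ ∩ L* if and only if λ ∈ σ. -/
/-
If the lattice vector `l` is not a nonnegative combination of the generators `vᵢ` of `σ`, Farkas'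
lemma over `ℚ` gives a rational `χ` with `vᵢ ⬝ χ ≥ 0` for all `i` and `l ⬝ χ < 0`; clearing
denominators turns `χ` into a lattice point of `σ̌` pairing negatively with `l`. Working over `ℚ`
rather than `ℝ` is what makes the separating functional rational.

Farkas' lemma is proved by induction on the number of generators (Fourier–Motzkin elimination):
when the functional `χ` separating `l` from the other generators pairs negatively with the new
generator `u`, project everything onto `ker χ` along `u` and separate again by some `χ'`. Pulling
`χ'` back along the projection gives a functional that vanishes on `u` and still separates.
-/

open Finset

/-- The real points of a lattice vector. -/
def toReal {n : ℕ} (l : Fin n → ℤ) : Fin n → ℝ := fun i => (l i : ℝ)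

/-- `σ` is a rational polyhedral cone: the set of nonnegative real combinations of
finitely many lattice vectors. -/
def IsRatPolyhedralCone {n : ℕ} (σ : Set (Fin n → ℝ)) : Prop :=
  ∃ (m : ℕ) (v : Fin m → Fin n → ℤ),
    σ = {x | ∃ c : Fin m → ℝ, (∀ i, 0 ≤ c i) ∧ x = ∑ i, c i • toReal (v i)}

open Matrix

section Projection

variable {𝕜 : Type*} [Field 𝕜] {n : ℕ}

def projAlong (u χ x : Fin n → 𝕜) : Fin n → 𝕜 := x - (x ⬝ᵥ χ / (u ⬝ᵥ χ)) • u

lemma projAlong_dotProduct (u χ x χ' : Fin n → 𝕜) :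
    projAlong u χ x ⬝ᵥ χ' = x ⬝ᵥ (χ' - (u ⬝ᵥ χ' / (u ⬝ᵥ χ)) • χ) := by
  simp only [projAlong, sub_dotProduct, dotProduct_sub, smul_dotProduct, dotProduct_smul,
    smul_eq_mul]
  ring

lemma projAlong_self {u χ : Fin n → 𝕜} (h : u ⬝ᵥ χ ≠ 0) : projAlong u χ u = 0 := by
  simp [projAlong, div_self h]

end Projection

section Farkas

variable {𝕜 : Type*} [Field 𝕜] [LinearOrder 𝕜] [IsStrictOrderedRing 𝕜] {n : ℕ}

lemma exists_dotProduct_neg_of_ne_zero {l : Fin n → 𝕜} (hl : l ≠ 0) : ∃ χ, l ⬝ᵥ χ < 0 := by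
  refine ⟨-l, ?_⟩
  have hpos : 0 < l ⬝ᵥ l :=
    lt_of_le_of_ne (sum_nonneg fun i _ => mul_self_nonneg (l i))
      (Ne.symm (dotProduct_self_eq_zero.not.mpr hl))
  simpa [dotProduct_neg] using hpos

lemma exists_nonneg_sum_smul_cons_of_projAlong {m : ℕ} {u χ l : Fin n → 𝕜}
    {w : Fin m → Fin n → 𝕜} (hw : ∀ i, 0 ≤ w i ⬝ᵥ χ) (hl : l ⬝ᵥ χ ≤ 0) (hu : u ⬝ᵥ χ < 0)
    {c : Fin m → 𝕜} (hc : ∀ i, 0 ≤ c i)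
    (hlc : projAlong u χ l = ∑ i, c i • projAlong u χ (w i)) :
    ∃ c' : Fin (m + 1) → 𝕜, (∀ i, 0 ≤ c' i) ∧ l = ∑ i, c' i • Fin.cons u w i := by
  set t := l ⬝ᵥ χ / (u ⬝ᵥ χ) - ∑ i, c i * (w i ⬝ᵥ χ / (u ⬝ᵥ χ))
  have ht : 0 ≤ t := by
    have : ∑ i, c i * (w i ⬝ᵥ χ / (u ⬝ᵥ χ)) ≤ 0 :=
      sum_nonpos fun i _ => mul_nonpos_of_nonneg_of_nonpos (hc i)
        (div_nonpos_of_nonneg_of_nonpos (hw i) hu.le)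
    linarith [div_nonneg_of_nonpos hl hu.le]
  refine ⟨Fin.cons t c, fun i => Fin.cases ht hc i, ?_⟩
  simp only [projAlong, smul_sub, sum_sub_distrib, smul_smul, ← sum_smul] at hlc
  rw [Fin.sum_univ_succ]
  simp only [Fin.cons_zero, Fin.cons_succ, t, sub_smul]
  rw [sub_eq_iff_eq_add] at hlc
  conv_lhs => rw [hlc]
  abel

theorem exists_nonneg_sum_smul_or_exists_dotProduct_neg {m : ℕ} (v : Fin m → Fin n → 𝕜)
    (l : Fin n → 𝕜) :
    (∃ c : Fin m → 𝕜, (∀ i, 0 ≤ c i) ∧ l = ∑ i, c i • v i) ∨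
      ∃ χ, (∀ i, 0 ≤ v i ⬝ᵥ χ) ∧ l ⬝ᵥ χ < 0 := by
  induction m generalizing l with
  | zero =>
    by_cases hl : l = 0
    · exact .inl ⟨0, fun _ => le_rfl, by simp [hl]⟩
    · obtain ⟨χ, hχ⟩ := exists_dotProduct_neg_of_ne_zero hl
      exact .inr ⟨χ, fun i => i.elim0, hχ⟩
  | succ m ih =>
    rw [← Fin.cons_self_tail v]
    set u := v 0
    set w := Fin.tail v
    obtain ⟨c, hc, hlc⟩ | ⟨χ, hwχ, hlχ⟩ := ih w l
    · refine .inl ⟨Fin.cons 0 c, fun i => Fin.cases le_rfl hc i, ?_⟩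
      simpa [Fin.sum_univ_succ] using hlc
    obtain huχ | huχ := le_or_gt 0 (u ⬝ᵥ χ)
    · exact .inr ⟨χ, fun i => Fin.cases huχ hwχ i, hlχ⟩
    obtain ⟨c, hc, hlc⟩ | ⟨χ', hwχ', hlχ'⟩ :=
      ih (fun i => projAlong u χ (w i)) (projAlong u χ l)
    · exact .inl (exists_nonneg_sum_smul_cons_of_projAlong hwχ hlχ.le huχ hc hlc)
    have hχ'' (x : Fin n → 𝕜) :
        x ⬝ᵥ (χ' - (u ⬝ᵥ χ' / (u ⬝ᵥ χ)) • χ) = projAlong u χ x ⬝ᵥ χ' :=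
      (projAlong_dotProduct u χ x χ').symm
    refine .inr ⟨χ' - (u ⬝ᵥ χ' / (u ⬝ᵥ χ)) • χ, Fin.forall_fin_succ.mpr ⟨?_, fun i => ?_⟩, ?_⟩
    · simp [hχ'', projAlong_self huχ.ne]
    · simpa [hχ''] using hwχ' i
    · simpa [hχ''] using hlχ'

end Farkas

lemma exists_pos_smul_eq_intCast {n : ℕ} (χ : Fin n → ℚ) :
    ∃ d : ℚ, 0 < d ∧ ∃ z : Fin n → ℤ, d • χ = Int.cast ∘ z := by
  set D := ∏ j, (χ j).den
  refine ⟨D, by positivity, fun j => (χ j).num * (D / (χ j).den : ℕ), funext fun j => ?_⟩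
  have hden : (χ j).den ∣ D := dvd_prod_of_mem _ (mem_univ j)
  simp only [Pi.smul_apply, smul_eq_mul, Function.comp_apply, Int.cast_mul, Int.cast_natCast,
    Nat.cast_div (K := ℚ) hden (by simp)]
  conv_lhs => rw [← Rat.num_div_den (χ j)]
  field_simp

theorem exists_rat_nonneg_sum_smul_or_exists_int_dotProduct_neg {m n : ℕ}
    (v : Fin m → Fin n → ℤ) (l : Fin n → ℤ) :
    (∃ c : Fin m → ℚ, (∀ i, 0 ≤ c i) ∧ (Int.cast ∘ l : Fin n → ℚ) = ∑ i, c i • Int.cast ∘ v i) ∨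
      ∃ z : Fin n → ℤ, (∀ i, 0 ≤ v i ⬝ᵥ z) ∧ l ⬝ᵥ z < 0 := by
  refine (exists_nonneg_sum_smul_or_exists_dotProduct_neg _ _).imp_right ?_
  rintro ⟨χ, hvχ, hlχ⟩
  obtain ⟨d, hd, z, hz⟩ := exists_pos_smul_eq_intCast χ
  have hcast (a : Fin n → ℤ) : ((a ⬝ᵥ z : ℤ) : ℚ) = d * ((Int.cast ∘ a) ⬝ᵥ χ) := by
    rw [← smul_eq_mul, ← dotProduct_smul, hz]
    exact (Int.castRingHom ℚ).map_dotProduct a z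
  refine ⟨z, fun i => ?_, ?_⟩
  · exact_mod_cast (hcast (v i)).symm ▸ mul_nonneg hd.le (hvχ i)
  · exact_mod_cast (hcast l).symm ▸ mul_neg_of_pos_of_neg hd hlχ

lemma mem_dualCone_of_forall_dotProduct_nonneg {m n : ℕ} {u : Fin m → Fin n → ℝ}
    {y : Fin n → ℝ} (h : ∀ i, 0 ≤ u i ⬝ᵥ y) :
    y ∈ dualCone {x | ∃ c : Fin m → ℝ, (∀ i, 0 ≤ c i) ∧ x = ∑ i, c i • u i} := by
  rintro _ ⟨c, hc, rfl⟩
  change 0 ≤ (∑ i, c i • u i) ⬝ᵥ y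
  simp only [sum_dotProduct, smul_dotProduct, smul_eq_mul]
  exact sum_nonneg fun i _ => mul_nonneg (hc i) (h i)

lemma toReal_dotProduct {n : ℕ} (a b : Fin n → ℤ) :
    toReal a ⬝ᵥ toReal b = ((a ⬝ᵥ b : ℤ) : ℝ) :=
  ((Int.castRingHom ℝ).map_dotProduct a b).symm

lemma toReal_eq_sum_smul_of_intCast_eq {m n : ℕ} {v : Fin m → Fin n → ℤ} {l : Fin n → ℤ}
    {c : Fin m → ℚ} (h : (Int.cast ∘ l : Fin n → ℚ) = ∑ i, c i • Int.cast ∘ v i) :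
    toReal l = ∑ i, (c i : ℝ) • toReal (v i) := by
  funext j
  have := congrArg (Rat.cast : ℚ → ℝ) (congrFun h j)
  push_cast [Finset.sum_apply] at this
  simpa [toReal, Finset.sum_apply] using this

/-- a lattice vector pairs nonnegatively with every lattice point of the
dual cone `σ̌` if and only if it lies in the rational polyhedral cone `σ`. -/
theorem mem_cone_iff_nonneg_pairing_with_dual_lattice
    {n : ℕ} (σ : Set (Fin n → ℝ)) (hσ : IsRatPolyhedralCone σ) (l : Fin n → ℤ) :
    (∀ χ : Fin n → ℤ, toReal χ ∈ dualCone σ → 0 ≤ ∑ i, l i * χ i) ↔ toReal l ∈ σ := by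
  obtain ⟨m, v, rfl⟩ := hσ
  constructor
  · intro H
    obtain ⟨c, hc, hlc⟩ | ⟨z, hvz, hlz⟩ :=
      exists_rat_nonneg_sum_smul_or_exists_int_dotProduct_neg v l
    · exact ⟨fun i => c i, fun i => Rat.cast_nonneg.mpr (hc i),
        toReal_eq_sum_smul_of_intCast_eq hlc⟩
    · have hz : toReal z ∈ dualCone _ := mem_dualCone_of_forall_dotProduct_nonneg fun i => by
        rw [toReal_dotProduct]; exact_mod_cast hvz i
      exact absurd (H z hz) hlz.not_ge
  · intro hl χ hχ
    have h : 0 ≤ toReal l ⬝ᵥ toReal χ := hχ _ hl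
    rwa [toReal_dotProduct, Int.cast_nonneg_iff] at h
end

section
/- (Gordan's Lemma) If σ ⊆ ℝ^n is a rational polyhedral cone, then the monoid σ ∩ ℤ^n is finitely generated. -/
open Finset

/-!
Every lattice point `l = ∑ cⱼ vⱼ` of the cone splits as `∑ ⌊cⱼ⌋ vⱼ + r`, where the remainder
`r = ∑ (cⱼ - ⌊cⱼ⌋) vⱼ` is a lattice point of the parallelepiped spanned by the `vⱼ`. That
parallelepiped is compact, so it contains only finitely many lattice points; together with the
`vⱼ`, which lie in it, they generate the monoid.
-/

open Set Topology

section Parallelepiped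

variable {ι E : Type*} [Fintype ι] [AddCommGroup E] [Module ℝ E]

theorem self_mem_parallelepiped [DecidableEq ι] (v : ι → E) (i : ι) : v i ∈ parallelepiped v := by
  refine (mem_parallelepiped_iff v (v i)).2 ⟨Pi.single i 1, ⟨?_, ?_⟩, by simp [Pi.single_apply]⟩
  · exact Pi.single_nonneg.2 zero_le_one
  · intro k
    by_cases hk : k = i <;> simp [hk]

theorem parallelepiped_subset_cone (v : ι → E) :
    parallelepiped v ⊆ {x | ∃ c : ι → ℝ, (∀ i, 0 ≤ c i) ∧ x = ∑ i, c i • v i} := by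
  intro x hx
  obtain ⟨t, ht, rfl⟩ := (mem_parallelepiped_iff v x).1 hx
  exact ⟨t, ht.1, rfl⟩

theorem isCompact_parallelepiped [TopologicalSpace E] [IsTopologicalAddGroup E]
    [ContinuousSMul ℝ E] (v : ι → E) : IsCompact (parallelepiped v) :=
  isCompact_Icc.image (by fun_prop)

end Parallelepiped

section Lattice

def toRealHom (n : ℕ) : (Fin n → ℤ) →+ (Fin n → ℝ) := (Int.castAddHom ℝ).compLeft (Fin n)

variable {n m : ℕ}

theorem toRealHom_apply (l : Fin n → ℤ) : toRealHom n l = toReal l := rfl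

theorem isClosedEmbedding_toReal : IsClosedEmbedding (toReal : (Fin n → ℤ) → Fin n → ℝ) :=
  .piMap fun _ => Int.isClosedEmbedding_coe_real

theorem finite_preimage_toReal_parallelepiped (v : Fin m → Fin n → ℝ) :
    (toReal ⁻¹' parallelepiped v).Finite :=
  (isClosedEmbedding_toReal.isCompact_preimage (isCompact_parallelepiped v)).finite_of_discrete

theorem mem_closure_preimage_toReal_parallelepiped {v : Fin m → Fin n → ℤ} {l : Fin n → ℤ}
    {c : Fin m → ℝ} (hc : ∀ j, 0 ≤ c j) (hl : toReal l = ∑ j, c j • toReal (v j)) :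
    l ∈ AddSubmonoid.closure (toReal ⁻¹' parallelepiped (toReal ∘ v)) := by
  set r := l - ∑ j, ⌊c j⌋₊ • v j
  have hr : r ∈ toReal ⁻¹' parallelepiped (toReal ∘ v) := by
    refine (mem_parallelepiped_iff _ _).2 ⟨fun j => c j - ⌊c j⌋₊, ⟨fun j => ?_, fun j => ?_⟩, ?_⟩
    · exact sub_nonneg.2 (Nat.floor_le (hc j))
    · exact sub_le_iff_le_add'.2 (Nat.lt_floor_add_one (c j)).le
    · simp only [r, ← toRealHom_apply, map_sub, map_sum, map_nsmul]
      simp only [toRealHom_apply, hl, sub_smul, sum_sub_distrib, Function.comp_apply,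
        Nat.cast_smul_eq_nsmul]
  have hv : ∀ j, v j ∈ toReal ⁻¹' parallelepiped (toReal ∘ v) :=
    self_mem_parallelepiped (toReal ∘ v)
  rw [← sub_add_cancel l (∑ j, ⌊c j⌋₊ • v j)]
  exact add_mem (AddSubmonoid.subset_closure hr)
    (sum_mem fun j _ => nsmul_mem (AddSubmonoid.subset_closure (hv j)) _)

end Lattice

/-- Gordan's Lemma: for a rational polyhedral cone `σ ⊆ ℝⁿ`, the additive
monoid of lattice points `σ ∩ ℤⁿ` is finitely generated. -/
theorem gordan_lemma
    {n : ℕ} (σ : Set (Fin n → ℝ)) (hσ : IsRatPolyhedralCone σ) :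
    ∃ (m : ℕ) (g : Fin m → Fin n → ℤ),
      (∀ i, toReal (g i) ∈ σ) ∧
      ∀ l : Fin n → ℤ, toReal l ∈ σ → ∃ a : Fin m → ℕ, l = ∑ i, a i • g i := by
  obtain ⟨m, v, rfl⟩ := hσ
  obtain ⟨k, g, -, hg⟩ := (finite_preimage_toReal_parallelepiped (toReal ∘ v)).fin_param
  have hgP : ∀ i, g i ∈ toReal ⁻¹' parallelepiped (toReal ∘ v) := fun i => hg ▸ mem_range_self i
  refine ⟨k, g, fun i => parallelepiped_subset_cone _ (hgP i), ?_⟩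
  rintro l ⟨c, hc, hl⟩
  rw [← AddSubmonoid.mem_closure_range_iff_of_fintype, hg]
  exact mem_closure_preimage_toReal_parallelepiped hc hl
end

section
/- Let σ ⊆ ℝ^n be a full-dimensional strongly convex rational polyhedral cone and let ρ ∈ ℤ^n. The following are equivalent: (1) ρ lies in the interior of σ; (2) for every real level c, the set {χ ∈ σ̌ ∩ ℤ^n : ⟨ρ, χ⟩ = c} is finite and ⟨ρ, χ⟩ ≥ 0 for all χ ∈ σ̌ ∩ ℤ^n, with ⟨ρ, χ⟩ = 0 only for χ = 0. -/
open Finset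

namespace ConAux

variable {n : ℕ}

noncomputable def dot (x y : Fin n → ℝ) : ℝ := ∑ i, x i * y i

lemma dot_add_left (x y z : Fin n → ℝ) : dot (x + y) z = dot x z + dot y z := by
  simp [dot, add_mul, Finset.sum_add_distrib]

lemma dot_add_right (x y z : Fin n → ℝ) : dot z (x + y) = dot z x + dot z y := by
  simp [dot, mul_add, Finset.sum_add_distrib]

lemma dot_smul_left (c : ℝ) (x z : Fin n → ℝ) : dot (c • x) z = c * dot x z := by
  simp [dot, Finset.mul_sum, mul_assoc]

lemma dot_smul_right (c : ℝ) (x z : Fin n → ℝ) : dot x (c • z) = c * dot x z := by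
  simp only [dot, Finset.mul_sum, Pi.smul_apply, smul_eq_mul]
  exact Finset.sum_congr rfl fun i _ => by ring

lemma dot_zero_left (z : Fin n → ℝ) : dot 0 z = 0 := by simp [dot]

lemma dot_zero_right (x : Fin n → ℝ) : dot x 0 = 0 := by simp [dot]

lemma dot_sum_left {α : Type*} (s : Finset α) (f : α → Fin n → ℝ) (z : Fin n → ℝ) :
    dot (∑ a ∈ s, f a) z = ∑ a ∈ s, dot (f a) z := by
  classical
  induction s using Finset.induction with
  | empty => simp [dot_zero_left]
  | insert _ _ h ih => simp [Finset.sum_insert h, dot_add_left, ih]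

lemma dot_single_left (j : Fin n) (a : ℝ) (z : Fin n → ℝ) :
    dot (Pi.single j a) z = a * z j := by
  classical
  unfold dot
  rw [Finset.sum_eq_single j]
  · simp
  · intro b _ hb; simp [Pi.single_apply, hb]
  · intro h; exact absurd (Finset.mem_univ j) h

lemma continuous_dot : Continuous (fun p : (Fin n → ℝ) × (Fin n → ℝ) => dot p.1 p.2) := by
  unfold dot
  exact continuous_finset_sum _ fun i _ =>
    ((continuous_apply i).comp continuous_fst).mul ((continuous_apply i).comp continuous_snd)

lemma continuous_dot_right (x : Fin n → ℝ) : Continuous (fun χ => dot x χ) := by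
  have := continuous_dot (n := n)
  exact this.comp (Continuous.prodMk_right x)

lemma abs_dot_le (x e : Fin n → ℝ) (B : ℝ) (hB : ∀ j, |e j| ≤ B) :
    |dot x e| ≤ (∑ j, |x j|) * B := by
  calc |dot x e| ≤ ∑ j, |x j * e j| := Finset.abs_sum_le_sum_abs _ _
    _ ≤ ∑ j, |x j| * B := by
        refine Finset.sum_le_sum fun j _ => ?_
        rw [abs_mul]
        by_cases h : x j = 0
        · simp [h]
        · exact mul_le_mul_of_nonneg_left (hB j) (abs_nonneg _)
    _ = (∑ j, |x j|) * B := by rw [Finset.sum_mul]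

lemma dot_cast (a b : Fin n → ℤ) :
    ((∑ j, a j * b j : ℤ) : ℝ) = dot (toReal a) (toReal b) := by
  push_cast [dot, toReal]; rfl

lemma toReal_eq_zero {l : Fin n → ℤ} (h : toReal l = 0) : l = 0 := by
  funext j
  have := congrFun h j
  simpa [toReal] using this

lemma clm_repr (f : (Fin n → ℝ) →L[ℝ] ℝ) (x : Fin n → ℝ) :
    f x = dot x (fun j => f (Pi.single j 1)) := by
  have hx : x = ∑ j, x j • (Pi.single j (1:ℝ) : Fin n → ℝ) := by
    funext k
    simp [Pi.single_apply, Finset.sum_apply]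
  calc f x = f (∑ j, x j • (Pi.single j (1:ℝ) : Fin n → ℝ)) := by rw [← hx]
    _ = ∑ j, x j * f (Pi.single j 1) := by
        rw [map_sum]; exact Finset.sum_congr rfl fun j _ => by rw [map_smul]; rfl
    _ = dot x (fun j => f (Pi.single j 1)) := rfl

lemma isClosed_dualCone (σ : Set (Fin n → ℝ)) : IsClosed (dualCone σ) := by
  have : dualCone σ = ⋂ x ∈ σ, {χ : Fin n → ℝ | 0 ≤ dot x χ} := by
    ext χ
    simp only [Set.mem_iInter, Set.mem_setOf_eq]
    rfl
  rw [this]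
  exact isClosed_biInter fun x _ => isClosed_Ici.preimage (continuous_dot_right x)

lemma interior_bound {σ : Set (Fin n → ℝ)} {ρ : Fin n → ℝ} (h : ρ ∈ interior σ) :
    ∃ ε > (0:ℝ), ∀ χ, (∀ x ∈ σ, 0 ≤ dot x χ) → ∀ j, ε * |χ j| ≤ dot ρ χ := by
  rw [mem_interior_iff_mem_nhds, Metric.mem_nhds_iff] at h
  obtain ⟨ε, hε, hball⟩ := h
  refine ⟨ε/2, by linarith, fun χ hχ j => ?_⟩
  have key : ∀ c : ℝ, |c| ≤ ε/2 → 0 ≤ dot ρ χ + c * χ j := by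
    intro c hc
    have hy : ρ + c • (Pi.single j (1:ℝ) : Fin n → ℝ) ∈ σ := by
      apply hball
      rw [Metric.mem_ball, dist_pi_lt_iff hε]
      intro b
      simp only [Pi.add_apply, Pi.smul_apply, smul_eq_mul, Real.dist_eq, add_sub_cancel_left]
      by_cases hb : b = j
      · subst hb; simp only [Pi.single_eq_same, mul_one]
        calc |c| ≤ ε/2 := hc
          _ < ε := by linarith
      · simp [Pi.single_apply, hb, hε]
    have := hχ _ hy
    rwa [dot_add_left, dot_smul_left, dot_single_left, one_mul] at this
  rcases abs_cases (χ j) with ⟨habs, _⟩ | ⟨habs, _⟩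
  · have := key (-(ε/2)) (by rw [abs_neg, abs_of_pos (by linarith)])
    rw [habs] at *; nlinarith
  · have := key (ε/2) (by rw [abs_of_pos (by linarith)])
    rw [habs] at *; nlinarith

lemma finite_box (B : ℤ) : {χ : Fin n → ℤ | ∀ j, |χ j| ≤ B}.Finite := by
  apply Set.Finite.subset (Set.finite_Icc (fun _ => -B) (fun _ => B))
  intro χ hχ
  rw [Set.mem_Icc]
  constructor <;> intro j
  · show -B ≤ χ j
    exact (abs_le.mp (hχ j)).1
  · show χ j ≤ B
    exact (abs_le.mp (hχ j)).2

section Gen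

variable {m : ℕ} (v : Fin m → Fin n → ℤ)

def gen : Set (Fin n → ℝ) :=
  {x | ∃ c : Fin m → ℝ, (∀ i, 0 ≤ c i) ∧ x = ∑ i, c i • toReal (v i)}

lemma zero_mem_gen : (0 : Fin n → ℝ) ∈ gen v :=
  ⟨0, fun _ => le_refl _, by simp⟩

lemma vmem_gen (i : Fin m) : toReal (v i) ∈ gen v := by
  classical
  refine ⟨Pi.single i 1, ?_, ?_⟩
  · intro j
    by_cases h : j = i <;> simp [Pi.single_apply, h]
  · rw [Finset.sum_eq_single i]
    · simp
    · intro b _ hb; simp [Pi.single_apply, hb]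
    · intro h; exact absurd (Finset.mem_univ i) h

lemma smul_mem_gen {t : ℝ} (ht : 0 ≤ t) {x : Fin n → ℝ} (hx : x ∈ gen v) :
    t • x ∈ gen v := by
  obtain ⟨c, hc, rfl⟩ := hx
  exact ⟨t • c, fun i => mul_nonneg ht (hc i), by
    rw [Finset.smul_sum]; exact Finset.sum_congr rfl fun i _ => by
      simp [smul_smul]⟩

lemma add_mem_gen {x y : Fin n → ℝ} (hx : x ∈ gen v) (hy : y ∈ gen v) :
    x + y ∈ gen v := by
  obtain ⟨c, hc, rfl⟩ := hx
  obtain ⟨d, hd, rfl⟩ := hy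
  exact ⟨c + d, fun i => add_nonneg (hc i) (hd i), by
    rw [← Finset.sum_add_distrib]
    exact Finset.sum_congr rfl fun i _ => by simp [add_smul]⟩

lemma convex_gen : Convex ℝ (gen v) := by
  intro x hx y hy a b ha hb _
  exact add_mem_gen v (smul_mem_gen v ha hx) (smul_mem_gen v hb hy)

lemma sum_mem_gen {α : Type*} (s : Finset α) (f : α → Fin n → ℝ)
    (h : ∀ a ∈ s, f a ∈ gen v) : ∑ a ∈ s, f a ∈ gen v := by
  classical
  induction s using Finset.induction with
  | empty => simpa using zero_mem_gen v
  | @insert a s ha ih =>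
      rw [Finset.sum_insert ha]
      exact add_mem_gen v (h a (Finset.mem_insert_self a s))
        (ih fun b hb => h b (Finset.mem_insert_of_mem hb))

lemma mem_dualCone_gen_iff (χ : Fin n → ℝ) :
    χ ∈ dualCone (gen v) ↔ ∀ i, 0 ≤ dot (toReal (v i)) χ := by
  constructor
  · intro h i; exact h _ (vmem_gen v i)
  · rintro h x ⟨c, hc, rfl⟩
    show (0:ℝ) ≤ dot _ χ
    rw [dot_sum_left]
    exact Finset.sum_nonneg fun i _ => by
      rw [dot_smul_left]; exact mul_nonneg (hc i) (h i)

lemma exists_funct (hsc : gen v ∩ (-(gen v)) = {0}) :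
    ∃ y : Fin n → ℝ, ∀ i, v i ≠ 0 → 0 < dot (toReal (v i)) y := by
  classical
  set s : Finset (Fin n → ℝ) :=
    (Finset.univ.filter (fun i => v i ≠ 0)).image (fun i => toReal (v i)) with hs
  have h0 : (0 : Fin n → ℝ) ∉ convexHull ℝ (s : Set (Fin n → ℝ)) := by
    intro h0
    rw [Finset.convexHull_eq] at h0
    obtain ⟨w, hw0, hw1, hcm⟩ := h0
    rw [Finset.centerMass_eq_of_sum_1 _ _ hw1] at hcm
    have : ∃ y₀ ∈ s, 0 < w y₀ := by
      by_contra hno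
      push_neg at hno
      have : ∑ y ∈ s, w y = 0 :=
        Finset.sum_eq_zero fun y hy => le_antisymm (hno y hy) (hw0 y hy)
      rw [hw1] at this; exact one_ne_zero this
    obtain ⟨y₀, hy₀s, hy₀⟩ := this
    have hmem : w y₀ • y₀ ∈ gen v := by
      apply smul_mem_gen v hy₀.le
      obtain ⟨i, hi, rfl⟩ := Finset.mem_image.mp hy₀s
      exact vmem_gen v i
    have hneg : -(w y₀ • y₀) ∈ gen v := by
      have : -(w y₀ • y₀) = ∑ y ∈ s.erase y₀, w y • id y := by
        have := Finset.add_sum_erase s (fun y => w y • id y) hy₀s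
        simp only [id_eq] at this hcm ⊢
        rw [hcm] at this
        linear_combination (norm := module) -this
      rw [this]
      apply sum_mem_gen
      intro a ha
      have has : a ∈ s := Finset.mem_of_mem_erase ha
      obtain ⟨i, hi, rfl⟩ := Finset.mem_image.mp has
      exact smul_mem_gen v (hw0 _ has) (vmem_gen v i)
    have : w y₀ • y₀ ∈ gen v ∩ (-(gen v)) := ⟨hmem, by simpa [Set.mem_neg] using hneg⟩
    rw [hsc] at this
    have hy00 : y₀ = 0 := by
      have := Set.mem_singleton_iff.mp this
      exact (smul_eq_zero.mp this).resolve_left (ne_of_gt hy₀)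
    obtain ⟨i, hi, hvi⟩ := Finset.mem_image.mp hy₀s
    rw [hy00] at hvi
    exact (Finset.mem_filter.mp hi).2 (toReal_eq_zero hvi)
  obtain ⟨f, u, hfu, hub⟩ := geometric_hahn_banach_point_closed
    ((convex_convexHull ℝ _)) (s.finite_toSet.isClosed_convexHull (𝕜 := ℝ)) h0
  have hu : 0 < u := by simpa using hfu
  refine ⟨fun j => f (Pi.single j 1), fun i hvi => ?_⟩
  have hmem : toReal (v i) ∈ convexHull ℝ (s : Set (Fin n → ℝ)) := by
    apply subset_convexHull
    simp only [Finset.coe_image, Set.mem_image, hs]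
    exact ⟨i, by simp [hvi], rfl⟩
  have hf : u < f (toReal (v i)) := hub _ hmem
  rw [clm_repr f (toReal (v i))] at hf
  linarith

lemma exists_w (y : Fin n → ℝ) (hy : ∀ i, v i ≠ 0 → 0 < dot (toReal (v i)) y) :
    ∃ w : Fin n → ℤ, ∀ i, v i ≠ 0 → (1:ℤ) ≤ ∑ j, v i j * w j := by
  classical
  set d : Fin m → ℝ := fun i => dot (toReal (v i)) y with hd
  set B : Fin m → ℝ := fun i => ∑ j, |toReal (v i) j| with hB
  have hBnn : ∀ i, 0 ≤ B i := fun i => Finset.sum_nonneg fun j _ => abs_nonneg _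
  set g : Fin m → ℝ := fun i => if h : v i = 0 then 0 else (B i + 1) / d i with hg
  have hgnn : ∀ i, 0 ≤ g i := by
    intro i
    rw [hg]
    by_cases h : v i = 0
    · simp [h]
    · simp only [h, dif_neg, not_false_iff]
      exact div_nonneg (by linarith [hBnn i]) (hy i h).le
  set t : ℝ := 1 + ∑ i, g i with ht
  have htpos : 0 < t := by
    have : 0 ≤ ∑ i, g i := Finset.sum_nonneg fun i _ => hgnn i
    linarith
  refine ⟨fun j => round (t * y j), fun i hvi => ?_⟩
  have hti : t * d i ≥ B i + 1 := by
    have h1 : g i ≤ ∑ i', g i' := Finset.single_le_sum (fun i' _ => hgnn i') (Finset.mem_univ i)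
    have h2 : g i = (B i + 1) / d i := by rw [hg]; simp [hvi]
    have hdi : 0 < d i := hy i hvi
    have h3 : (B i + 1) / d i ≤ t := by rw [ht]; linarith
    calc B i + 1 = ((B i + 1) / d i) * d i := by field_simp
      _ ≤ t * d i := mul_le_mul_of_nonneg_right h3 hdi.le
  set w : Fin n → ℤ := fun j => round (t * y j) with hw
  have hsplit : toReal w = t • y + (toReal w - t • y) := by ring
  have herr : |dot (toReal (v i)) (toReal w - t • y)| ≤ B i := by
    have := abs_dot_le (toReal (v i)) (toReal w - t • y) 1 ?_
    · simpa [hB] using this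
    · intro j
      have : |t * y j - round (t * y j)| ≤ 1/2 := abs_sub_round _
      rw [abs_sub_comm] at this
      simp only [Pi.sub_apply, Pi.smul_apply, smul_eq_mul, toReal, hw]
      linarith
  have key : (1:ℝ) ≤ dot (toReal (v i)) (toReal w) := by
    rw [hsplit, dot_add_right, dot_smul_right]
    have := abs_le.mp herr
    have : -(B i) ≤ dot (toReal (v i)) (toReal w - t • y) := this.1
    rw [← hd] at *
    nlinarith [hti]
  rw [hw]
  have := key
  rw [← dot_cast] at this
  exact_mod_cast this

lemma sum_mem_interior (hfull : Submodule.span ℝ (gen v) = ⊤) :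
    (∑ i, toReal (v i)) ∈ interior (gen v) := by
  classical
  set L : (Fin m → ℝ) →ₗ[ℝ] (Fin n → ℝ) :=
    ∑ i, LinearMap.smulRight (LinearMap.proj i) (toReal (v i)) with hL
  have hLapp : ∀ c, L c = ∑ i, c i • toReal (v i) := by
    intro c
    rw [hL]
    simp [LinearMap.sum_apply]
  have hsurj : Function.Surjective L := by
    rw [← LinearMap.range_eq_top]
    rw [← top_le_iff, ← hfull, Submodule.span_le]
    rintro x ⟨c, _, rfl⟩
    exact ⟨c, hLapp c⟩
  set T := LinearMap.toContinuousLinearMap L with hT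
  have hopen : IsOpenMap T := ContinuousLinearMap.isOpenMap T hsurj
  set U : Set (Fin m → ℝ) := {c | ∀ i, 0 < c i} with hU
  have hUopen : IsOpen U := by
    have : U = ⋂ i, (fun c : Fin m → ℝ => c i) ⁻¹' Set.Ioi 0 := by
      ext c; simp [hU]
    rw [this]
    exact isOpen_iInter_of_finite fun i => isOpen_Ioi.preimage (continuous_apply i)
  have hsub : T '' U ⊆ gen v := by
    rintro x ⟨c, hc, rfl⟩
    exact ⟨c, fun i => (hc i).le, by rw [← hLapp]; rfl⟩
  have hmem : (∑ i, toReal (v i)) ∈ T '' U := by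
    refine ⟨fun _ => 1, fun i => one_pos, ?_⟩
    show L _ = _
    rw [hLapp]; simp
  exact interior_maximal hsub (hopen U hUopen) hmem

end Gen

lemma not_mem_interior_closure {σ : Set (Fin n → ℝ)} {ρ s₀ : Fin n → ℝ}
    (hconv : Convex ℝ σ) (hs₀ : s₀ ∈ interior σ)
    (hρ : ρ ∉ interior σ) : ρ ∉ interior (closure σ) := by
  intro hmem
  apply hρ
  have hopen : IsOpen (interior (closure σ)) := isOpen_interior
  have hcont : Continuous (fun t : ℝ => ρ + t • (ρ - s₀)) := by
    continuity
  have : (fun t : ℝ => ρ + t • (ρ - s₀)) ⁻¹' (interior (closure σ)) ∈ nhds (0:ℝ) := by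
    apply hcont.continuousAt.preimage_mem_nhds
    simpa using hopen.mem_nhds hmem
  rw [Metric.mem_nhds_iff] at this
  obtain ⟨ε, hε, hball⟩ := this
  set t := ε/2 with htdef
  have htpos : 0 < t := by linarith
  have hz : ρ + t • (ρ - s₀) ∈ interior (closure σ) := by
    apply hball
    have : dist t 0 < ε := by
      rw [Real.dist_eq, sub_zero, abs_of_pos htpos]; linarith
    exact this
  have hzcl : ρ + t • (ρ - s₀) ∈ closure σ := interior_subset hz
  have h1t : (0:ℝ) < 1 + t := by linarith
  have hcombo := hconv.combo_closure_interior_mem_interior hzcl hs₀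
      (a := 1/(1+t)) (b := t/(1+t)) (by positivity) (by positivity) (by field_simp)
  have heq : (1/(1+t)) • (ρ + t • (ρ - s₀)) + (t/(1+t)) • s₀ = ρ := by
    match_scalars <;> field_simp <;> ring
  rwa [heq] at hcombo

lemma exists_chistar {σ : Set (Fin n → ℝ)} {ρ : Fin n → ℝ}
    (hconv : Convex ℝ σ) (h0σ : (0 : Fin n → ℝ) ∈ σ)
    (hcone : ∀ (t : ℝ), 0 ≤ t → ∀ x ∈ σ, t • x ∈ σ)
    (h : ρ ∉ interior (closure σ)) :
    ∃ χ : Fin n → ℝ, χ ∈ dualCone σ ∧ χ ≠ 0 ∧ dot ρ χ ≤ 0 := by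
  classical
  have hseq : ∀ k : ℕ, ∃ y, dist y ρ < 1/(k+1) ∧ y ∉ closure σ := by
    intro k
    rw [mem_interior_iff_mem_nhds, Metric.mem_nhds_iff] at h
    push_neg at h
    obtain ⟨y, hy1, hy2⟩ := Set.not_subset.mp (h (1/(k+1)) (by positivity))
    exact ⟨y, Metric.mem_ball.mp hy1, hy2⟩
  choose y hy1 hy2 using hseq
  have hylim : Filter.Tendsto y Filter.atTop (nhds ρ) := by
    rw [tendsto_iff_dist_tendsto_zero]
    apply squeeze_zero (fun k => dist_nonneg) (fun k => (hy1 k).le)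
    exact tendsto_one_div_add_atTop_nhds_zero_nat
  have hsep : ∀ k : ℕ, ∃ χ : Fin n → ℝ,
      χ ∈ dualCone σ ∧ ‖χ‖ = 1 ∧ dot (y k) χ < 0 := by
    intro k
    obtain ⟨f, u, hfa, hfy⟩ := geometric_hahn_banach_closed_point
      hconv.closure isClosed_closure (hy2 k)
    have hu : 0 < u := by
      have := hfa 0 (subset_closure h0σ)
      simpa using this
    have hfneg : ∀ x ∈ σ, f x ≤ 0 := by
      intro x hx
      by_contra hpos
      push_neg at hpos
      have hr : (0:ℝ) ≤ (u+1)/f x := by positivity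
      have := hfa _ (subset_closure (hcone _ hr x hx))
      rw [map_smul] at this
      simp only [smul_eq_mul] at this
      rw [div_mul_cancel₀ _ (ne_of_gt hpos)] at this
      linarith
    set χ' : Fin n → ℝ := fun j => -(f (Pi.single j 1)) with hχ'
    have hrepr : ∀ x, dot x χ' = -(f x) := by
      intro x
      have h1 : dot x χ' = - dot x (fun j => f (Pi.single j 1)) := by
        unfold dot
        rw [← Finset.sum_neg_distrib]
        refine Finset.sum_congr rfl fun j _ => ?_
        rw [hχ']
        ring
      rw [h1, ← clm_repr]
    have hdual : χ' ∈ dualCone σ := by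
      intro x hx
      show (0:ℝ) ≤ dot x χ'
      rw [hrepr]
      linarith [hfneg x hx]
    have hyneg : dot (y k) χ' < 0 := by
      rw [hrepr]; linarith
    have hne : χ' ≠ 0 := by
      intro h0
      rw [h0, dot_zero_right] at hyneg
      exact lt_irrefl 0 hyneg
    refine ⟨‖χ'‖⁻¹ • χ', ?_, norm_smul_inv_norm hne, ?_⟩
    · intro x hx
      show (0:ℝ) ≤ dot x (‖χ'‖⁻¹ • χ')
      rw [dot_smul_right]
      exact mul_nonneg (inv_nonneg.mpr (norm_nonneg _)) (hdual x hx)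
    · rw [dot_smul_right]
      exact mul_neg_of_pos_of_neg (inv_pos.mpr (norm_pos_iff.mpr hne)) hyneg
  choose u hu1 hu2 hu3 using hsep
  have hK : IsCompact (Metric.sphere (0 : Fin n → ℝ) 1 ∩ dualCone σ) :=
    (isCompact_sphere 0 1).inter_right (isClosed_dualCone σ)
  have humem : ∀ k, u k ∈ Metric.sphere (0 : Fin n → ℝ) 1 ∩ dualCone σ := by
    intro k
    exact ⟨by rw [mem_sphere_zero_iff_norm]; exact hu2 k, hu1 k⟩
  obtain ⟨χ, hχK, φ, hφ, hlim⟩ := hK.tendsto_subseq humem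
  refine ⟨χ, hχK.2, ?_, ?_⟩
  · intro h0
    have := hχK.1
    rw [h0, mem_sphere_zero_iff_norm, norm_zero] at this
    exact one_ne_zero this.symm
  · have hyφ : Filter.Tendsto (y ∘ φ) Filter.atTop (nhds ρ) :=
      hylim.comp hφ.tendsto_atTop
    have hpair : Filter.Tendsto (fun k => ((y ∘ φ) k, (u ∘ φ) k))
        Filter.atTop (nhds (ρ, χ)) := hyφ.prodMk_nhds hlim
    have h2 := ((continuous_dot (n := n)).tendsto (ρ, χ)).comp hpair
    refine le_of_tendsto h2 (Filter.Eventually.of_forall fun k => ?_)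
    exact (hu3 (φ k)).le

theorem main_gen {n m : ℕ} (v : Fin m → Fin n → ℤ) (hsc : gen v ∩ (-(gen v)) = {0})
    (hfull : Submodule.span ℝ (gen v) = ⊤) (ρ : Fin n → ℤ) :
    toReal ρ ∈ interior (gen v) ↔
      ((∀ c : ℝ, {χ : Fin n → ℤ |
          toReal χ ∈ dualCone (gen v) ∧ (∑ i, (ρ i : ℝ) * (χ i : ℝ)) = c}.Finite) ∧
        (∀ χ : Fin n → ℤ, toReal χ ∈ dualCone (gen v) →
          0 ≤ ∑ i, ρ i * χ i ∧ ((∑ i, ρ i * χ i) = 0 → χ = 0))) := by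
  classical
  constructor
  · -- forward
    intro hρ
    obtain ⟨ε, hε, hkey⟩ := interior_bound hρ
    have hcast : ∀ χ : Fin n → ℤ,
        (∑ i, (ρ i : ℝ) * (χ i : ℝ)) = dot (toReal ρ) (toReal χ) := by
      intro χ; simp [dot, toReal]
    refine ⟨?_, ?_⟩
    · intro c
      apply Set.Finite.subset (finite_box ⌈c/ε⌉)
      rintro χ ⟨hχd, hχc⟩
      intro j
      have hb := hkey (toReal χ) hχd j
      rw [← hcast χ, hχc] at hb
      have h1 : |toReal χ j| ≤ c/ε := by
        rw [le_div_iff₀ hε]; linarith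
      have h2 : |toReal χ j| = ((|χ j| : ℤ) : ℝ) := by push_cast [toReal]; rfl
      have h3 : ((|χ j| : ℤ) : ℝ) ≤ ((⌈c/ε⌉ : ℤ) : ℝ) := by
        rw [← h2]
        exact h1.trans (Int.le_ceil _)
      exact_mod_cast h3
    · intro χ hχ
      have h0 : (0:ℝ) ≤ dot (toReal ρ) (toReal χ) := by
        rw [← hcast χ]
        exact hχ _ (interior_subset hρ)
      constructor
      · rw [← dot_cast] at h0
        exact_mod_cast h0
      · intro hzero
        have hz : dot (toReal ρ) (toReal χ) = 0 := by
          rw [← dot_cast, hzero]; simp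
        funext j
        have hb := hkey (toReal χ) hχ j
        rw [hz] at hb
        have h1 : |toReal χ j| = 0 := by nlinarith [abs_nonneg (toReal χ j)]
        have h2 : toReal χ j = 0 := abs_eq_zero.mp h1
        have : ((χ j : ℤ) : ℝ) = 0 := h2
        exact_mod_cast this
  · -- converse
    rintro ⟨hfin, hpos⟩
    by_contra hρ
    obtain ⟨y, hy⟩ := exists_funct v hsc
    obtain ⟨w, hw⟩ := exists_w v y hy
    have hs₀ := sum_mem_interior v hfull
    have hnotcl := not_mem_interior_closure (convex_gen v) hs₀ hρ
    obtain ⟨χs, hχdual, hχne, hχneg⟩ := exists_chistar (convex_gen v) (zero_mem_gen v)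
      (fun t ht x hx => smul_mem_gen v ht hx) hnotcl
    set m₀ : ℤ := ∑ i, ∑ j, |v i j| with hm₀
    have hm₀nn : (0:ℤ) ≤ m₀ :=
      Finset.sum_nonneg fun i _ => Finset.sum_nonneg fun j _ => abs_nonneg _
    have hm₀B : ∀ i, (∑ j, |toReal (v i) j|) ≤ (m₀:ℝ) := by
      intro i
      have h1 : (∑ j, |v i j|) ≤ m₀ := by
        rw [hm₀]
        exact Finset.single_le_sum (f := fun i => ∑ j, |v i j|)
          (fun i' _ => Finset.sum_nonneg fun j _ => abs_nonneg _) (Finset.mem_univ i)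
      have h2 : (∑ j, |toReal (v i) j|) = ((∑ j, |v i j| : ℤ) : ℝ) := by
        push_cast [toReal]; rfl
      rw [h2]
      exact_mod_cast h1
    set X : ℕ → (Fin n → ℤ) := fun t j => ⌊(t:ℝ) * χs j⌋ + m₀ * w j with hX
    set E : ℕ → (Fin n → ℝ) :=
      fun t j => ((⌊(t:ℝ) * χs j⌋ : ℝ) - (t:ℝ) * χs j) with hE
    have hdecomp : ∀ t : ℕ, toReal (X t) = (t:ℝ) • χs + E t + (m₀:ℝ) • toReal w := by
      intro t
      funext j
      simp only [toReal, hX, hE, Pi.add_apply, Pi.smul_apply, smul_eq_mul]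
      push_cast
      ring
    have herr : ∀ t : ℕ, ∀ j, |E t j| ≤ 1 := by
      intro t j
      have h1 := Int.floor_le ((t:ℝ) * χs j)
      have h2 := Int.lt_floor_add_one ((t:ℝ) * χs j)
      rw [hE, abs_le]
      constructor <;> simp <;> linarith
    have hdot : ∀ (x : Fin n → ℝ) (t : ℕ), dot x (toReal (X t)) =
        (t:ℝ) * dot x χs + dot x (E t) + (m₀:ℝ) * dot x (toReal w) := by
      intro x t
      rw [hdecomp t, dot_add_right, dot_add_right, dot_smul_right, dot_smul_right]
    have hXdual : ∀ t : ℕ, toReal (X t) ∈ dualCone (gen v) := by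
      intro t
      rw [mem_dualCone_gen_iff]
      intro i
      by_cases hvi : v i = 0
      · have hz : toReal (v i) = 0 := by funext j; simp [toReal, hvi]
        rw [hz, dot_zero_left]
      · rw [hdot]
        have t1 : 0 ≤ (t:ℝ) * dot (toReal (v i)) χs :=
          mul_nonneg (Nat.cast_nonneg t) (hχdual _ (vmem_gen v i))
        have t2 := abs_dot_le (toReal (v i)) (E t) 1 (herr t)
        rw [mul_one] at t2
        have t2' : -(m₀:ℝ) ≤ dot (toReal (v i)) (E t) := by
          have ha := (abs_le.mp t2).1
          have hb := hm₀B i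
          linarith
        have t3 : (m₀:ℝ) ≤ (m₀:ℝ) * dot (toReal (v i)) (toReal w) := by
          have h1 : (1:ℝ) ≤ dot (toReal (v i)) (toReal w) := by
            rw [← dot_cast]
            exact_mod_cast hw i hvi
          have h0 : (0:ℝ) ≤ (m₀:ℝ) := by exact_mod_cast hm₀nn
          nlinarith
        linarith
    set C : ℝ := (∑ j, |toReal ρ j|) + (m₀:ℝ) * dot (toReal ρ) (toReal w) with hC
    have hXbound : ∀ t : ℕ, dot (toReal ρ) (toReal (X t)) ≤ C := by
      intro t
      rw [hdot]
      have t1 : (t:ℝ) * dot (toReal ρ) χs ≤ 0 := by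
        have := mul_le_mul_of_nonneg_left hχneg (Nat.cast_nonneg (α := ℝ) t)
        simpa using this
      have t2 := abs_dot_le (toReal ρ) (E t) 1 (herr t)
      rw [mul_one] at t2
      have t2' := (abs_le.mp t2).2
      rw [hC]
      linarith
    have hcast : ∀ χ : Fin n → ℤ,
        (∑ i, (ρ i : ℝ) * (χ i : ℝ)) = dot (toReal ρ) (toReal χ) := by
      intro χ; simp [dot, toReal]
    set S : Set (Fin n → ℤ) := {χ | toReal χ ∈ dualCone (gen v) ∧
      (∑ i, (ρ i : ℝ) * (χ i : ℝ)) ∈ Set.Icc (0:ℝ) C} with hS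
    have hSfin : S.Finite := by
      apply Set.Finite.subset (Set.Finite.biUnion
        ((Finset.Icc (0:ℤ) ⌈C⌉).finite_toSet) (fun k _ => hfin ((k : ℤ) : ℝ)))
      rintro χ ⟨hχd, hχI⟩
      have hc2 : (∑ i, (ρ i : ℝ) * (χ i : ℝ)) = ((∑ i, ρ i * χ i : ℤ) : ℝ) := by
        push_cast; rfl
      refine Set.mem_biUnion (x := ∑ i, ρ i * χ i) ?_ ⟨hχd, ?_⟩
      · rw [Finset.mem_coe, Finset.mem_Icc]
        constructor
        · have := hχI.1
          rw [hc2] at this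
          exact_mod_cast this
        · have h1 := hχI.2
          rw [hc2] at h1
          have h2 : ((∑ i, ρ i * χ i : ℤ) : ℝ) ≤ ((⌈C⌉ : ℤ) : ℝ) := h1.trans (Int.le_ceil _)
          exact_mod_cast h2
      · rw [hc2]
    have hXS : ∀ t : ℕ, X t ∈ S := by
      intro t
      refine ⟨hXdual t, ?_, ?_⟩
      · rw [hcast (X t), ← dot_cast]
        exact_mod_cast (hpos (X t) (hXdual t)).1
      · rw [hcast (X t)]
        exact hXbound t
    obtain ⟨j₀, hj₀⟩ := Function.ne_iff.mp hχne
    have himfin : ((fun χ : Fin n → ℤ => |(χ j₀ : ℝ)|) '' S).Finite := hSfin.image _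
    obtain ⟨B, hB⟩ := himfin.bddAbove
    obtain ⟨t, ht⟩ := exists_nat_gt ((B + 1 + |(m₀:ℝ) * (w j₀:ℝ)|) / |χs j₀|)
    have habs : 0 < |χs j₀| := abs_pos.mpr hj₀
    have h1 : B + 1 + |(m₀:ℝ) * (w j₀:ℝ)| < (t:ℝ) * |χs j₀| := by
      rwa [div_lt_iff₀ habs] at ht
    have h2 : |(X t j₀ : ℝ)| ≤ B := hB (Set.mem_image_of_mem _ (hXS t))
    have hXj : (X t j₀ : ℝ) = (⌊(t:ℝ) * χs j₀⌋ : ℝ) + (m₀:ℝ) * (w j₀ : ℝ) := by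
      simp only [hX]
      push_cast
      ring
    have hfl : |(t:ℝ) * χs j₀| - 1 ≤ |(⌊(t:ℝ) * χs j₀⌋ : ℝ)| := by
      have ha := Int.floor_le ((t:ℝ) * χs j₀)
      have hb := Int.lt_floor_add_one ((t:ℝ) * χs j₀)
      rcases abs_cases ((t:ℝ) * χs j₀) with ⟨e1, e2⟩ | ⟨e1, e2⟩ <;>
        rcases abs_cases ((⌊(t:ℝ) * χs j₀⌋ : ℝ)) with ⟨f1, f2⟩ | ⟨f1, f2⟩ <;> linarith
    have htri : |(⌊(t:ℝ) * χs j₀⌋ : ℝ)| ≤ |(X t j₀ : ℝ)| + |(m₀:ℝ) * (w j₀:ℝ)| := by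
      calc |(⌊(t:ℝ) * χs j₀⌋ : ℝ)|
          = |(X t j₀ : ℝ) + (-((m₀:ℝ) * (w j₀:ℝ)))| := by rw [hXj]; ring_nf
        _ ≤ |(X t j₀ : ℝ)| + |(-((m₀:ℝ) * (w j₀:ℝ)))| := abs_add_le _ _
        _ = |(X t j₀ : ℝ)| + |(m₀:ℝ) * (w j₀:ℝ)| := by rw [abs_neg]
    have habsmul : |(t:ℝ) * χs j₀| = (t:ℝ) * |χs j₀| := by
      rw [abs_mul, Nat.abs_cast]
    linarith

end ConAux

/-- for a full-dimensional strongly convex rational polyhedral cone `σ`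
and a lattice vector `ρ`, the vector `ρ` lies in the interior of `σ` if and only if
every level set `{χ ∈ σ̌ ∩ ℤⁿ : ⟨ρ, χ⟩ = c}` is finite, `⟨ρ, χ⟩ ≥ 0` on `σ̌ ∩ ℤⁿ`, and
`⟨ρ, χ⟩ = 0` only for `χ = 0` (the conical-grading criterion). -/
theorem interior_iff_conical_grading
    {n : ℕ} (σ : Set (Fin n → ℝ)) (hσ : IsRatPolyhedralCone σ)
    (hsc : σ ∩ (-σ) = {0}) (hfull : Submodule.span ℝ σ = ⊤)
    (ρ : Fin n → ℤ) :
    toReal ρ ∈ interior σ ↔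
      ((∀ c : ℝ, {χ : Fin n → ℤ |
          toReal χ ∈ dualCone σ ∧ (∑ i, (ρ i : ℝ) * (χ i : ℝ)) = c}.Finite) ∧
        (∀ χ : Fin n → ℤ, toReal χ ∈ dualCone σ →
          0 ≤ ∑ i, ρ i * χ i ∧ ((∑ i, ρ i * χ i) = 0 → χ = 0))) := by
  obtain ⟨m, v, rfl⟩ := hσ
  exact ConAux.main_gen v hsc hfull ρ
end

section
/- Let σ ⊆ ℝ^n be a strongly convex rational polyhedral cone, η a lattice point in the interior of the dual cone σ̌, and q > 1 a real number. Then ∑_{λ ∈ σ ∩ ℤ^n} q^{−⟨λ,η⟩} < ∞. -/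
open Finset

lemma summable_int_pow_natAbs {r : ℝ} (h0 : 0 ≤ r) (h1 : r < 1) :
    Summable (fun a : ℤ => r ^ a.natAbs) := by
  apply Summable.of_nat_of_neg
  · simpa using summable_geometric_of_lt_one h0 h1
  · simpa using summable_geometric_of_lt_one h0 h1

lemma summable_pi_pow_natAbs {r : ℝ} (h0 : 0 ≤ r) (h1 : r < 1) :
    ∀ n : ℕ, Summable (fun l : Fin n → ℤ => ∏ i, r ^ (l i).natAbs) := by
  intro n
  induction n with
  | zero => exact Summable.of_finite
  | succ m ih =>
      have h := (summable_int_pow_natAbs h0 h1).mul_of_nonneg ih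
        (fun a => pow_nonneg h0 _)
        (fun l => Finset.prod_nonneg fun i _ => pow_nonneg h0 _)
      have h2 := h.comp_injective (Fin.consEquiv (fun _ : Fin (m+1) => ℤ)).symm.injective
      refine h2.congr fun l => ?_
      rw [Fin.prod_univ_succ]
      rfl

/-- for a strongly convex rational polyhedral cone `σ`, a lattice point `η`
in the interior of the dual cone `σ̌`, and `q > 1`, the series
`∑_{λ ∈ σ ∩ ℤⁿ} q^{−⟨λ,η⟩}` converges. -/
theorem local_L_function_converges
    {n : ℕ} (σ : Set (Fin n → ℝ)) (hσ : IsRatPolyhedralCone σ)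
    (hsc : σ ∩ (-σ) = {0})
    (η : Fin n → ℤ) (hη : toReal η ∈ interior (dualCone σ))
    (q : ℝ) (hq : 1 < q) :
    Summable (fun l : {l : Fin n → ℤ // toReal l ∈ σ} =>
      q ^ (-((∑ i, l.1 i * η i : ℤ) : ℝ))) := by
  rcases Nat.eq_zero_or_pos n with hn | hn
  · subst hn
    exact Summable.of_finite
  have hq0 : (0:ℝ) < q := lt_trans one_pos hq
  rw [mem_interior_iff_mem_nhds, Metric.mem_nhds_iff] at hη
  obtain ⟨ε, hε, hball⟩ := hη
  have key : ∀ x ∈ σ, ∀ i : Fin n, (ε/2) * |x i| ≤ ∑ j, x j * (η j : ℝ) := by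
    intro x hx i
    set c : ℝ := if 0 ≤ x i then ε/2 else -(ε/2) with hc
    have hcabs : |c| = ε/2 := by
      rw [hc]; split_ifs <;> simp [abs_of_pos (half_pos hε)]
    set χ : Fin n → ℝ := fun j => (η j : ℝ) - (if j = i then c else 0) with hχ
    have hmem : χ ∈ Metric.ball (toReal η) ε := by
      rw [Metric.mem_ball, dist_pi_lt_iff hε]
      intro j
      have hd : χ j - toReal η j = -(if j = i then c else 0) := by simp [hχ, toReal]
      rw [Real.dist_eq, hd, abs_neg]
      split_ifs
      · rw [hcabs]; linarith
      · simpa using hε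
    have hdual := hball hmem x hx
    have hexpand : ∑ j, x j * χ j = (∑ j, x j * (η j : ℝ)) - c * x i := by
      simp only [hχ, mul_sub, Finset.sum_sub_distrib, mul_ite, mul_zero]
      rw [Finset.sum_ite_eq' Finset.univ i (fun j => x j * c)]
      simp [mul_comm]
    rw [hexpand] at hdual
    have hce : c * x i = (ε/2) * |x i| := by
      rcases le_or_gt 0 (x i) with h | h
      · rw [hc, if_pos h, abs_of_nonneg h]
      · rw [hc, if_neg (not_le.mpr h), abs_of_neg h]; ring
    linarith
  have hn' : (0:ℝ) < n := by exact_mod_cast hn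
  set r : ℝ := q ^ (-(ε/(2*n))) with hr
  have hr0 : 0 < r := Real.rpow_pos_of_pos hq0 _
  have hr1 : r < 1 := by
    apply Real.rpow_lt_one_of_one_lt_of_neg hq
    rw [neg_lt_zero]
    positivity
  have hsum := (summable_pi_pow_natAbs hr0.le hr1 n).subtype {l : Fin n → ℤ | toReal l ∈ σ}
  apply Summable.of_nonneg_of_le (fun l => Real.rpow_nonneg hq0.le _) _ hsum
  intro l
  set S : ℤ := ∑ i, l.1 i * η i with hS
  set K : ℕ := ∑ i, (l.1 i).natAbs with hK
  have hSK : (ε/(2*n)) * K ≤ (S:ℝ) := by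
    have hsum2 : (ε/2) * ∑ i, |toReal l.1 i| ≤ n * (S:ℝ) := by
      rw [Finset.mul_sum]
      have hns : (n : ℝ) * (S:ℝ) = ∑ _i : Fin n, (S:ℝ) := by
        simp [Finset.sum_const, mul_comm]
      rw [hns]
      apply Finset.sum_le_sum
      intro i _
      have hk := key (toReal l.1) l.2 i
      have hcast : ∑ j, toReal l.1 j * (η j : ℝ) = (S:ℝ) := by
        rw [hS]; push_cast; rfl
      rw [hcast] at hk
      exact hk
    have habs : ∑ i, |toReal l.1 i| = (K:ℝ) := by
      rw [hK]; push_cast [Nat.cast_natAbs]; rfl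
    rw [habs] at hsum2
    rw [div_mul_eq_mul_div, div_le_iff₀ (by positivity)]
    nlinarith [hsum2, hn'.le, hn']
  have hle1 : q ^ (-(S:ℝ)) ≤ q ^ (-(ε/(2*n)) * (K:ℝ)) := by
    apply Real.rpow_le_rpow_of_exponent_le hq.le
    nlinarith [hSK]
  have hle2 : q ^ (-(ε/(2*n)) * (K:ℝ)) = ∏ i, r ^ (l.1 i).natAbs := by
    rw [Finset.prod_pow_eq_pow_sum, ← hK, hr, ← Real.rpow_natCast (q ^ (-(ε/(2*(n:ℝ))))) K,
      ← Real.rpow_mul hq0.le]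
  calc q ^ (-((S:ℤ):ℝ)) ≤ q ^ (-(ε/(2*n)) * (K:ℝ)) := hle1
    _ = ∏ i, r ^ (l.1 i).natAbs := hle2
end

section
/- Let σ ⊆ ℝ^n be a closed convex cone with dual cone σ̌, and let τ be a face of σ with τ* := τ^⊥ ∩ σ̌. Then (τ*)* := (τ*)^⊥ ∩ σ = τ when σ is a polyhedral cone and τ is an exposed face, so that τ ↦ τ* is an inclusion-reversing bijection between faces of σ and faces of σ̌. -/
open Finset

-- ===== auxiliary machinery =====

noncomputable section CARATH


/-- Conic Carathéodory: a nonneg combination over `s` is a nonneg combination over a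
linearly independent subset. -/
lemma dfb_carath {n m : ℕ} (v : Fin m → Fin n → ℝ) :
    ∀ (N : ℕ) (s : Finset (Fin m)), s.card ≤ N → ∀ (x : Fin n → ℝ),
      (∃ c : Fin m → ℝ, (∀ i, 0 ≤ c i) ∧ x = ∑ i ∈ s, c i • v i) →
      ∃ t ⊆ s, LinearIndependent ℝ (fun i : t => v i) ∧
        ∃ c : Fin m → ℝ, (∀ i, 0 ≤ c i) ∧ x = ∑ i ∈ t, c i • v i := by
  intro N
  induction N with
  | zero =>
    intro s hs x hx
    refine ⟨s, le_refl _, ?_, hx⟩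
    have hse : s = ∅ := Finset.card_eq_zero.mp (Nat.le_zero.mp hs)
    subst hse
    have : IsEmpty ((∅ : Finset (Fin m)) : Type) := by
      exact ⟨fun x => absurd x.2 (Finset.notMem_empty _)⟩
    exact linearIndependent_empty_type
  | succ N ih =>
    intro s hs x hx
    by_cases hli : LinearIndependent ℝ (fun i : s => v i)
    · exact ⟨s, le_refl _, hli, hx⟩
    · obtain ⟨c, hc, rfl⟩ := hx
      obtain ⟨g, hg0, i₁, hgi₁⟩ := Fintype.not_linearIndependent_iff.mp hli
      set lam : Fin m → ℝ := fun i => if h : i ∈ s then g ⟨i, h⟩ else 0 with hlam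
      have hlamsum : ∑ i ∈ s, lam i • v i = 0 := by
        rw [← hg0, ← Finset.sum_attach s (fun i => lam i • v i)]
        refine Finset.sum_congr rfl fun i _ => by simp [hlam, i.2]
      have hlamne : lam i₁ ≠ 0 := by simpa [hlam, i₁.2] using hgi₁
      have key : ∀ mu : Fin m → ℝ, (∑ i ∈ s, mu i • v i = 0) → (∃ j ∈ s, 0 < mu j) →
          ∃ t ⊆ s, LinearIndependent ℝ (fun i : t => v i) ∧
            ∃ c' : Fin m → ℝ, (∀ i, 0 ≤ c' i) ∧
              (∑ i ∈ s, c i • v i) = ∑ i ∈ t, c' i • v i := by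
        rintro mu hmusum ⟨j, hjs, hj⟩
        set P : Finset (Fin m) := s.filter (fun i => 0 < mu i) with hP
        have hPne : P.Nonempty := ⟨j, Finset.mem_filter.mpr ⟨hjs, hj⟩⟩
        obtain ⟨i₀, hi₀P, hi₀min⟩ := P.exists_min_image (fun i => c i / mu i) hPne
        have hi₀s : i₀ ∈ s := (Finset.mem_filter.mp hi₀P).1
        have hmui₀ : 0 < mu i₀ := (Finset.mem_filter.mp hi₀P).2
        set t₀ : ℝ := c i₀ / mu i₀ with ht₀
        have ht₀nn : 0 ≤ t₀ := div_nonneg (hc i₀) hmui₀.le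
        set c' : Fin m → ℝ := fun i => if i ∈ s then c i - t₀ * mu i else 0 with hc'
        have hc'nn : ∀ i, 0 ≤ c' i := by
          intro i
          by_cases his : i ∈ s
          · simp only [hc', if_pos his]
            rcases le_or_gt (mu i) 0 with hmi | hmi
            · nlinarith [hc i]
            · have h1 : t₀ ≤ c i / mu i := hi₀min i (Finset.mem_filter.mpr ⟨his, hmi⟩)
              have h2 : t₀ * mu i ≤ c i := (le_div_iff₀ hmi).mp h1
              linarith
          · simp [hc', his]
        have hc'i₀ : c' i₀ = 0 := by
          simp only [hc', if_pos hi₀s, ht₀]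
          field_simp
          ring
        have hsum' : ∑ i ∈ s, c i • v i = ∑ i ∈ s.erase i₀, c' i • v i := by
          have h1 : ∑ i ∈ s, c' i • v i = ∑ i ∈ s, c i • v i := by
            have h2 : ∑ i ∈ s, c' i • v i
                = ∑ i ∈ s, (c i • v i - t₀ • (mu i • v i)) := by
              refine Finset.sum_congr rfl fun i hi => ?_
              simp [hc', if_pos hi, sub_smul, smul_smul]
            rw [h2, Finset.sum_sub_distrib, ← Finset.smul_sum, hmusum, smul_zero, sub_zero]
          rw [← h1, ← Finset.add_sum_erase _ _ hi₀s, hc'i₀, zero_smul, zero_add]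
        obtain ⟨t, hts, htli, cfin⟩ := ih (s.erase i₀)
          (by have := Finset.card_erase_of_mem hi₀s; omega) _ ⟨c', hc'nn, rfl⟩
        exact ⟨t, hts.trans (Finset.erase_subset _ _), htli, by rw [hsum']; exact cfin⟩
      rcases exists_or_forall_not (fun j => j ∈ s ∧ 0 < lam j) with ⟨j, hjs, hj⟩ | hneg
      · exact key lam hlamsum ⟨j, hjs, hj⟩
      · refine key (fun i => - lam i) (by simpa [neg_smul] using congrArg Neg.neg hlamsum) ?_
        refine ⟨i₁, i₁.2, ?_⟩
        have h3 : ¬ (0 < lam i₁) := fun h => hneg i₁ ⟨i₁.2, h⟩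
        have h4 := lt_of_le_of_ne (not_lt.mp h3) hlamne
        show (0:ℝ) < - lam ↑i₁
        linarith

end CARATH

noncomputable section DFBaux

lemma dfb_pair_inner {n : ℕ} (x χ : EuclideanSpace ℝ (Fin n)) :
    (inner ℝ x χ : ℝ) = ∑ i, x i * χ i := by
  simp [PiLp.inner_apply, RCLike.inner_apply, mul_comm]

/-- A finitely generated cone with linearly independent generators is closed. -/
lemma dfb_isClosed_indep {n : ℕ} {m : ℕ} (v : Fin m → Fin n → ℝ) (t : Finset (Fin m))
    (hli : LinearIndependent ℝ (fun i : t => v i)) :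
    IsClosed {x : Fin n → ℝ |
      ∃ c : Fin m → ℝ, (∀ i, 0 ≤ c i) ∧ x = ∑ i ∈ t, c i • v i} := by
  classical
  let L : (t → ℝ) →ₗ[ℝ] (Fin n → ℝ) :=
    { toFun := fun d => ∑ i : t, d i • v i
      map_add' := by
        intro a b
        simp [add_smul, Finset.sum_add_distrib]
      map_smul' := by
        intro r a
        simp [smul_smul, Finset.smul_sum] }
  have hker : LinearMap.ker L = ⊥ := by
    rw [LinearMap.ker_eq_bot']
    intro d hd
    have := Fintype.linearIndependent_iff.mp hli d hd
    funext i; exact this i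
  have hemb := LinearMap.isClosedEmbedding_of_injective hker
  have horth : IsClosed {d : t → ℝ | ∀ i, 0 ≤ d i} := by
    have : {d : t → ℝ | ∀ i, 0 ≤ d i} = ⋂ i, {d : t → ℝ | 0 ≤ d i} := by
      ext d; simp [Set.mem_iInter]
    rw [this]
    exact isClosed_iInter fun i =>
      IsClosed.preimage (continuous_apply i) isClosed_Ici
  have himg : {x : Fin n → ℝ |
      ∃ c : Fin m → ℝ, (∀ i, 0 ≤ c i) ∧ x = ∑ i ∈ t, c i • v i}
      = L '' {d : t → ℝ | ∀ i, 0 ≤ d i} := by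
    ext x
    constructor
    · rintro ⟨c, hc, rfl⟩
      refine ⟨fun i => c i, fun i => hc i, ?_⟩
      show (∑ i : t, c i • v i) = _
      rw [Finset.univ_eq_attach, Finset.sum_attach t (fun i => c i • v i)]
    · rintro ⟨d, hd, rfl⟩
      refine ⟨fun i => if h : i ∈ t then d ⟨i, h⟩ else 0,
        fun i => by by_cases h : i ∈ t
                    · simpa [h] using hd ⟨i, h⟩
                    · simp [h], ?_⟩
      show (∑ i : t, d i • v i) = _
      rw [← Finset.sum_attach t (fun i => (if h : i ∈ t then d ⟨i, h⟩ else 0) • v i),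
        Finset.univ_eq_attach]
      exact Finset.sum_congr rfl fun i _ => by simp [i.2]
  rw [himg]
  exact hemb.isClosedMap _ horth

end DFBaux

noncomputable section DFBaux2

lemma dfb_isClosed {n m : ℕ} (v : Fin m → Fin n → ℝ) :
    IsClosed {x : Fin n → ℝ |
      ∃ c : Fin m → ℝ, (∀ i, 0 ≤ c i) ∧ x = ∑ i, c i • v i} := by
  classical
  have heq : {x : Fin n → ℝ | ∃ c : Fin m → ℝ, (∀ i, 0 ≤ c i) ∧ x = ∑ i, c i • v i}
      = ⋃ t ∈ {t : Finset (Fin m) | LinearIndependent ℝ (fun i : t => v i)},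
          {x : Fin n → ℝ |
            ∃ c : Fin m → ℝ, (∀ i, 0 ≤ c i) ∧ x = ∑ i ∈ t, c i • v i} := by
    ext x
    simp only [Set.mem_setOf_eq, Set.mem_iUnion]
    constructor
    · rintro ⟨c, hc, rfl⟩
      obtain ⟨t, _, htli, c', hc', hx⟩ := dfb_carath v (Finset.univ.card) Finset.univ le_rfl _
        ⟨c, hc, rfl⟩
      exact ⟨t, htli, c', hc', hx⟩
    · rintro ⟨t, htli, c, hc, rfl⟩
      refine ⟨fun i => if i ∈ t then c i else 0,
        fun i => by by_cases h : i ∈ t <;> simp [h, hc i], ?_⟩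
      rw [← Finset.sum_subset (Finset.subset_univ t)
        (fun i _ hit => by simp [hit])]
      exact Finset.sum_congr rfl fun i hi => by simp [hi]
  rw [heq]
  exact Set.Finite.isClosed_biUnion (Set.toFinite _)
    (fun t ht => dfb_isClosed_indep v t ht)

lemma dfb_farkas {n m : ℕ} (v : Fin m → Fin n → ℝ) {y : Fin n → ℝ}
    (hy : y ∈ dualCone (dualCone {x | ∃ c : Fin m → ℝ, (∀ i, 0 ≤ c i) ∧ x = ∑ i, c i • v i})) :
    ∃ c : Fin m → ℝ, (∀ i, 0 ≤ c i) ∧ y = ∑ i, c i • v i := by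
  set σ : Set (Fin n → ℝ) := {x | ∃ c : Fin m → ℝ, (∀ i, 0 ≤ c i) ∧ x = ∑ i, c i • v i}
    with hσdef
  let K : ProperCone ℝ (EuclideanSpace ℝ (Fin n)) :=
    { carrier := WithLp.ofLp ⁻¹' σ
      zero_mem' := ⟨fun _ => 0, fun _ => le_refl _, by simp⟩
      smul_mem' := by
        rintro r x ⟨c, hc, hx⟩
        refine ⟨fun i => (r : ℝ) * c i, fun i => mul_nonneg r.2 (hc i), ?_⟩
        show r • x.ofLp = ∑ i, ((r : ℝ) * c i) • v i
        rw [hx, Finset.smul_sum]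
        exact Finset.sum_congr rfl fun i _ => by rw [mul_smul]; rfl
      add_mem' := by
        rintro x z ⟨c, hc, hx⟩ ⟨d, hd, hz⟩
        refine ⟨fun i => c i + d i, fun i => add_nonneg (hc i) (hd i), ?_⟩
        show x.ofLp + z.ofLp = ∑ i, (c i + d i) • v i
        rw [hx, hz]
        simp [add_smul, Finset.sum_add_distrib]
      isClosed' := (dfb_isClosed v).preimage (PiLp.continuous_ofLp 2 _) }
  have hdd := ProperCone.innerDual_innerDual K
  have hmem : WithLp.toLp 2 y ∈ ProperCone.innerDual
      (ProperCone.innerDual (K : Set (EuclideanSpace ℝ (Fin n))) :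
        Set (EuclideanSpace ℝ (Fin n))) := by
    rw [ProperCone.mem_innerDual]
    intro x hx
    rw [SetLike.mem_coe, ProperCone.mem_innerDual] at hx
    have hxd : x.ofLp ∈ dualCone σ := by
      intro z hz
      have := hx (x := WithLp.toLp 2 z) hz
      rw [dfb_pair_inner] at this
      exact this
    rw [dfb_pair_inner]
    exact hy _ hxd
  rw [hdd] at hmem
  exact hmem

end DFBaux2


section DFBmain

variable {n : ℕ}

lemma dfb_pair_comb {m : ℕ} (v : Fin m → Fin n → ℝ) (c : Fin m → ℝ) (χ : Fin n → ℝ) :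
    ∑ i, (∑ j, c j • v j) i * χ i = ∑ j, c j * ∑ i, v j i * χ i := by
  simp only [Finset.sum_apply, Pi.smul_apply, smul_eq_mul, Finset.sum_mul, Finset.mul_sum]
  rw [Finset.sum_comm]
  exact Finset.sum_congr rfl fun j _ => Finset.sum_congr rfl fun i _ => by ring

lemma dfb_pair_sum_right {m : ℕ} (x : Fin n → ℝ) (g : Fin m → Fin n → ℝ) :
    ∑ i, x i * (∑ k, g k) i = ∑ k, ∑ i, x i * g k i := by
  simp only [Finset.sum_apply, Finset.mul_sum]
  exact Finset.sum_comm

lemma dfb_zero_mem_dualCone (σ : Set (Fin n → ℝ)) : (0 : Fin n → ℝ) ∈ dualCone σ := by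
  intro x _
  simp

lemma dfb_sum_mem_dualCone {m : ℕ} (σ : Set (Fin n → ℝ)) (g : Fin m → Fin n → ℝ)
    (hg : ∀ k, g k ∈ dualCone σ) : (∑ k, g k) ∈ dualCone σ := by
  intro x hx
  rw [dfb_pair_sum_right]
  exact Finset.sum_nonneg fun k _ => hg k x hx

end DFBmain

-- ===== end auxiliary machinery =====

/-- `σ` is a polyhedral cone: nonnegative combinations of finitely many vectors. -/
def IsPolyhedralCone {n : ℕ} (σ : Set (Fin n → ℝ)) : Prop :=
  ∃ (m : ℕ) (v : Fin m → Fin n → ℝ),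
    σ = {x | ∃ c : Fin m → ℝ, (∀ i, 0 ≤ c i) ∧ x = ∑ i, c i • v i}

/-- `τ` is an exposed face of `σ`: `τ = σ ∩ H_χ` for some `χ` in the dual cone. -/
def IsExposedFaceOf {n : ℕ} (τ σ : Set (Fin n → ℝ)) : Prop :=
  ∃ χ ∈ dualCone σ, τ = {x ∈ σ | ∑ i, x i * χ i = 0}

/-- The face of `σ` dual to a subset `υ` of `σ̌`: `υ* = υ^⊥ ∩ σ`. -/
def primalFace {n : ℕ} (σ υ : Set (Fin n → ℝ)) : Set (Fin n → ℝ) :=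
  {x ∈ σ | ∀ χ ∈ υ, ∑ i, x i * χ i = 0}

/-- for a polyhedral cone `σ` and an exposed face `τ`,
`(τ*)* = τ`; consequently `τ ↦ τ* = τ^⊥ ∩ σ̌` is an inclusion-reversing bijection
between the (exposed) faces of `σ` and those of `σ̌`. -/
theorem dualFace_bijection
    {n : ℕ} (σ : Set (Fin n → ℝ)) (hσ : IsPolyhedralCone σ) :
    (∀ τ, IsExposedFaceOf τ σ → primalFace σ (dualFace σ τ) = τ) ∧
    (∀ τ₁ τ₂, IsExposedFaceOf τ₁ σ → IsExposedFaceOf τ₂ σ →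
      dualFace σ τ₁ = dualFace σ τ₂ → τ₁ = τ₂) ∧
    (∀ υ, IsExposedFaceOf υ (dualCone σ) →
      ∃ τ, IsExposedFaceOf τ σ ∧ dualFace σ τ = υ) ∧
    (∀ τ₁ τ₂, IsExposedFaceOf τ₁ σ → IsExposedFaceOf τ₂ σ → τ₁ ⊆ τ₂ →
      dualFace σ τ₂ ⊆ dualFace σ τ₁) := by
  classical
  obtain ⟨m, v, hσ⟩ := hσ
  subst hσ
  set σ : Set (Fin n → ℝ) := {x | ∃ c : Fin m → ℝ, (∀ i, 0 ≤ c i) ∧ x = ∑ i, c i • v i}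
    with hσdef
  have hvmem : ∀ j, v j ∈ σ := by
    intro j
    refine ⟨fun i => if i = j then 1 else 0, fun i => by positivity, ?_⟩
    rw [show (∑ i, (if i = j then (1:ℝ) else 0) • v i) = ∑ i, if i = j then v i else 0 by
      exact Finset.sum_congr rfl fun i _ => by split <;> simp]
    simp
  have part1 : ∀ τ, IsExposedFaceOf τ σ → primalFace σ (dualFace σ τ) = τ := by
    rintro τ ⟨χ₀, hχ₀, rfl⟩
    ext x
    constructor
    · rintro ⟨hxσ, hx⟩
      exact ⟨hxσ, hx χ₀ ⟨hχ₀, fun y hy => hy.2⟩⟩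
    · rintro ⟨hxσ, hx⟩
      exact ⟨hxσ, fun χ hχ => hχ.2 x ⟨hxσ, hx⟩⟩
  refine ⟨part1, fun τ₁ τ₂ h1 h2 h => by rw [← part1 τ₁ h1, ← part1 τ₂ h2, h], ?_, ?_⟩
  · -- surjectivity
    rintro υ ⟨y, hy, rfl⟩
    set υ : Set (Fin n → ℝ) := {χ ∈ dualCone σ | ∑ i, χ i * y i = 0} with hυdef
    have hyσ : y ∈ σ := dfb_farkas v hy
    -- the exposing functional for primalFace σ υ
    set H : Fin m → Prop := fun j => ∃ χ, χ ∈ υ ∧ 0 < ∑ i, v j i * χ i with hHdef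
    set g : Fin m → Fin n → ℝ := fun j => if h : H j then h.choose else 0 with hgdef
    have hgmem : ∀ j, g j ∈ dualCone σ := by
      intro j
      by_cases h : H j
      · simp only [hgdef, dif_pos h]
        exact h.choose_spec.1.1
      · simp only [hgdef, dif_neg h]
        exact dfb_zero_mem_dualCone σ
    have hgυ : ∀ j, H j → g j ∈ υ ∧ 0 < ∑ i, v j i * (g j) i := by
      intro j h
      simp only [hgdef, dif_pos h]
      exact ⟨h.choose_spec.1, h.choose_spec.2⟩
    set χ₀ : Fin n → ℝ := ∑ j, g j with hχ₀def
    have hχ₀mem : χ₀ ∈ dualCone σ := dfb_sum_mem_dualCone σ g hgmem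
    have hτ : primalFace σ υ = {x ∈ σ | ∑ i, x i * χ₀ i = 0} := by
      ext x
      constructor
      · rintro ⟨hxσ, hx⟩
        refine ⟨hxσ, ?_⟩
        rw [hχ₀def, dfb_pair_sum_right]
        refine Finset.sum_eq_zero fun j _ => ?_
        by_cases h : H j
        · exact hx (g j) (hgυ j h).1
        · simp only [hgdef, dif_neg h]
          simp
      · rintro ⟨hxσ, hx⟩
        refine ⟨hxσ, ?_⟩
        -- each pairing with g j vanishes
        have hterm : ∀ j, ∑ i, x i * (g j) i = 0 := by
          have h0 : ∑ j, ∑ i, x i * (g j) i = 0 := by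
            rw [← dfb_pair_sum_right, ← hχ₀def, hx]
          have hnn : ∀ j ∈ Finset.univ, 0 ≤ ∑ i, x i * (g j) i :=
            fun j _ => hgmem j x hxσ
          intro j
          exact (Finset.sum_eq_zero_iff_of_nonneg hnn).mp h0 j (Finset.mem_univ j)
        intro χ hχ
        obtain ⟨c, hc, hxeq⟩ := hxσ
        rw [hxeq, dfb_pair_comb]
        refine Finset.sum_eq_zero fun j _ => ?_
        rcases eq_or_lt_of_le (hc j) with hcj | hcj
        · rw [← hcj, zero_mul]
        have hvχ : ∑ i, v j i * χ i ≤ 0 := by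
          by_contra hpos
          push_neg at hpos
          have hHj : H j := ⟨χ, hχ, hpos⟩
          obtain ⟨hgjυ, hgjpos⟩ := hgυ j hHj
          -- pair x (g j) = 0 forces c j * pair (v j) (g j) = 0
          have hxgj := hterm j
          rw [hxeq, dfb_pair_comb] at hxgj
          have hnn : ∀ k ∈ Finset.univ, 0 ≤ c k * ∑ i, v k i * (g j) i :=
            fun k _ => mul_nonneg (hc k) (hgmem j (v k) (hvmem k))
          have := (Finset.sum_eq_zero_iff_of_nonneg hnn).mp hxgj j (Finset.mem_univ j)
          nlinarith
        have hvχ' : 0 ≤ ∑ i, v j i * χ i := hχ.1 (v j) (hvmem j)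
        rw [le_antisymm hvχ hvχ', mul_zero]
    refine ⟨primalFace σ υ, ⟨χ₀, hχ₀mem, hτ⟩, ?_⟩
    -- dualFace σ (primalFace σ υ) = υ
    have hyτ : y ∈ primalFace σ υ := by
      refine ⟨hyσ, fun χ hχ => ?_⟩
      have := hχ.2
      rw [show (∑ i, y i * χ i) = ∑ i, χ i * y i from
        Finset.sum_congr rfl fun i _ => mul_comm _ _]
      exact this
    ext χ
    constructor
    · rintro ⟨hχd, hχ⟩
      refine ⟨hχd, ?_⟩
      have := hχ y hyτ
      rw [show (∑ i, χ i * y i) = ∑ i, y i * χ i from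
        Finset.sum_congr rfl fun i _ => mul_comm _ _]
      exact this
    · intro hχ
      exact ⟨hχ.1, fun x hx => hx.2 χ hχ⟩
  · rintro τ₁ τ₂ _ _ hsub χ ⟨hχd, hχ⟩
    exact ⟨hχd, fun x hx => hχ x (hsub hx)⟩
end

section
/- Let σ ⊆ ℝ^n be a polyhedral cone and τ a face of σ. Then the duality of faces reverses dimension complementarily: dim τ + dim τ* = n, where τ* = τ^⊥ ∩ σ̌ and dimension means the dimension of the linear span. -/
open Finset

/-- The "orthogonal space" of a set w.r.t. the standard pairing. -/
def Korth {n : ℕ} (s : Set (Fin n → ℝ)) : Submodule ℝ (Fin n → ℝ) where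
  carrier := {y | ∀ x ∈ s, ∑ i, x i * y i = 0}
  zero_mem' := by intro x _; simp
  add_mem' := by
    intro a b ha hb x hx
    simp only [Pi.add_apply, mul_add, Finset.sum_add_distrib]
    rw [ha x hx, hb x hx]; ring
  smul_mem' := by
    intro c y hy x hx
    simp only [Pi.smul_apply, smul_eq_mul]
    have : ∑ i, x i * (c * y i) = c * ∑ i, x i * y i := by
      rw [Finset.mul_sum]; congr 1; ext i; ring
    rw [this, hy x hx, mul_zero]

lemma Korth_eq_orthogonal {n : ℕ} (s : Set (Fin n → ℝ)) :
    (Korth s).map ((WithLp.linearEquiv 2 ℝ (Fin n → ℝ)).symm : (Fin n → ℝ) →ₗ[ℝ] EuclideanSpace ℝ (Fin n))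
      = (Submodule.span ℝ ((WithLp.linearEquiv 2 ℝ (Fin n → ℝ)).symm '' s))ᗮ := by
  ext y
  rw [Submodule.mem_map_equiv, Submodule.mem_orthogonal]
  constructor
  · intro h u hu
    induction hu using Submodule.span_induction with
    | mem x hx =>
      obtain ⟨x, hx, rfl⟩ := hx
      simpa [PiLp.inner_apply, RCLike.inner_apply, mul_comm] using h x hx
    | zero => simp
    | add a b _ _ ha hb => rw [inner_add_left, ha, hb]; ring
    | smul a x _ hx => rw [inner_smul_left, hx]; simp
  · intro h x hx
    have := h _ (Submodule.subset_span (Set.mem_image_of_mem _ hx))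
    simpa [PiLp.inner_apply, RCLike.inner_apply, mul_comm] using this

lemma finrank_span_add_finrank_Korth {n : ℕ} (s : Set (Fin n → ℝ)) :
    Module.finrank ℝ (Submodule.span ℝ s) + Module.finrank ℝ (Korth s) = n := by
  have h1 : Module.finrank ℝ (Korth s)
      = Module.finrank ℝ ((Submodule.span ℝ ((WithLp.linearEquiv 2 ℝ (Fin n → ℝ)).symm '' s))ᗮ) := by
    rw [← Korth_eq_orthogonal, LinearEquiv.finrank_map_eq]
  have h2 : Module.finrank ℝ (Submodule.span ℝ s)
      = Module.finrank ℝ (Submodule.span ℝ ((WithLp.linearEquiv 2 ℝ (Fin n → ℝ)).symm '' s)) := by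
    rw [← LinearEquiv.finrank_map_eq (WithLp.linearEquiv 2 ℝ (Fin n → ℝ)).symm, Submodule.map_span]; rfl
  rw [h1, h2, Submodule.finrank_add_finrank_orthogonal, finrank_euclideanSpace, Fintype.card_fin]

lemma pair_sum {n m : ℕ} (c : Fin m → ℝ) (v : Fin m → Fin n → ℝ) (y : Fin n → ℝ) :
    ∑ i, (∑ j, c j • v j) i * y i = ∑ j, c j * ∑ i, v j i * y i := by
  simp only [Finset.sum_apply, Pi.smul_apply, smul_eq_mul, Finset.sum_mul, Finset.mul_sum]
  rw [Finset.sum_comm]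
  congr 1; ext j; congr 1; ext i; ring

lemma pair_add_smul {n : ℕ} (x χ w : Fin n → ℝ) (ε : ℝ) :
    ∑ i, x i * (χ + ε • w) i = (∑ i, x i * χ i) + ε * ∑ i, x i * w i := by
  simp only [Pi.add_apply, Pi.smul_apply, smul_eq_mul, mul_add, Finset.sum_add_distrib,
    Finset.mul_sum]
  congr 1; congr 1; ext i; ring


/-- for a full-dimensional strongly convex polyhedral cone `σ ⊆ ℝⁿ` and a
face `τ` of `σ`, face duality reverses dimension complementarily:
`dim τ + dim τ* = n`, where dimensions are those of the linear spans. -/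
theorem dim_face_add_dim_dualFace
    {n : ℕ} (σ : Set (Fin n → ℝ)) (hσ : IsPolyhedralCone σ)
    (hsc : σ ∩ (-σ) = {0}) (hfull : Submodule.span ℝ σ = ⊤)
    (τ : Set (Fin n → ℝ)) (hτ : IsExposedFaceOf τ σ) :
    Module.finrank ℝ (Submodule.span ℝ τ) +
      Module.finrank ℝ (Submodule.span ℝ (dualFace σ τ)) = n := by
  obtain ⟨m, v, hv⟩ := hσ
  obtain ⟨χ, hχ, hτeq⟩ := hτ
  set p : Fin m → ℝ := fun j => ∑ i, v j i * χ i with hpdef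
  have hvσ : ∀ j, v j ∈ σ := by
    intro j
    rw [hv]
    refine ⟨fun i => if i = j then 1 else 0, fun i => by by_cases h : i = j <;> simp [h], ?_⟩
    simp [ite_smul]
  have hp0 : ∀ j, 0 ≤ p j := fun j => hχ (v j) (hvσ j)
  set S : Set (Fin m) := {j | p j = 0} with hSdef
  -- decomposition of elements of τ
  have hdecomp : ∀ x ∈ τ, ∃ c : Fin m → ℝ,
      (∀ j, 0 ≤ c j) ∧ (∀ j, p j ≠ 0 → c j = 0) ∧ x = ∑ j, c j • v j := by
    intro x hx
    rw [hτeq] at hx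
    obtain ⟨hxσ, hx0⟩ := hx
    rw [hv] at hxσ
    obtain ⟨c, hc0, hcx⟩ := hxσ
    refine ⟨c, hc0, ?_, hcx⟩
    rw [hcx, pair_sum] at hx0
    have hz := (Finset.sum_eq_zero_iff_of_nonneg
      (fun j _ => mul_nonneg (hc0 j) (hp0 j))).mp hx0
    intro j hpj
    rcases mul_eq_zero.mp (hz j (Finset.mem_univ j)) with h | h
    · exact h
    · exact absurd h hpj
  have hvτ : ∀ j, p j = 0 → v j ∈ τ := by
    intro j hj
    rw [hτeq]
    exact ⟨hvσ j, hj⟩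
  -- Lemma A
  have hA : Submodule.span ℝ τ = Submodule.span ℝ (v '' S) := by
    apply le_antisymm
    · rw [Submodule.span_le]
      intro x hx
      obtain ⟨c, hc0, hcS, hcx⟩ := hdecomp x hx
      rw [hcx]
      refine Submodule.sum_mem _ (fun j _ => ?_)
      by_cases h : p j = 0
      · exact Submodule.smul_mem _ _ (Submodule.subset_span ⟨j, h, rfl⟩)
      · rw [hcS j h, zero_smul]; exact Submodule.zero_mem _
    · rw [Submodule.span_le]
      rintro x ⟨j, hj, rfl⟩
      exact Submodule.subset_span (hvτ j hj)
  -- χ is in the dual face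
  have hχF : χ ∈ dualFace σ τ := by
    refine ⟨hχ, fun x hx => ?_⟩
    rw [hτeq] at hx
    exact hx.2
  -- Lemma C
  have hC : Submodule.span ℝ (dualFace σ τ) = Korth (v '' S) := by
    apply le_antisymm
    · rw [Submodule.span_le]
      rintro y ⟨hy1, hy2⟩ x ⟨j, hj, rfl⟩
      exact hy2 (v j) (hvτ j hj)
    · intro w hw
      set q : Fin m → ℝ := fun j => ∑ i, v j i * w i with hqdef
      have hq : ∀ j, p j = 0 → q j = 0 := fun j hj => hw (v j) ⟨j, hj, rfl⟩
      -- choose ε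
      obtain ⟨ε, hε, hεle⟩ : ∃ ε > 0, ∀ j, p j ≠ 0 → ε * |q j| ≤ p j := by
        classical
        set f : Fin m → ℝ := fun j => if p j = 0 then 1 else p j / (|q j| + 1) with hfdef
        have hfpos : ∀ j, 0 < f j := by
          intro j
          by_cases h : p j = 0
          · simp [hfdef, h]
          · have : 0 < p j := lt_of_le_of_ne (hp0 j) (Ne.symm h)
            simp only [hfdef, h, if_false]
            positivity
        set F : Finset ℝ := insert 1 (Finset.image f Finset.univ) with hFdef
        have hFne : F.Nonempty := ⟨1, Finset.mem_insert_self _ _⟩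
        refine ⟨F.min' hFne, ?_, ?_⟩
        · rcases Finset.mem_insert.mp (F.min'_mem hFne) with h | h
          · rw [h]; norm_num
          · obtain ⟨j, _, hj⟩ := Finset.mem_image.mp h
            rw [← hj]; exact hfpos j
        · intro j hpj
          have hle : F.min' hFne ≤ f j :=
            F.min'_le _ (Finset.mem_insert_of_mem (Finset.mem_image_of_mem f (Finset.mem_univ j)))
          have hfj : f j = p j / (|q j| + 1) := by simp [hfdef, hpj]
          have habs : 0 ≤ |q j| := abs_nonneg _
          calc F.min' hFne * |q j| ≤ f j * |q j| :=
                mul_le_mul_of_nonneg_right hle habs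
            _ = p j / (|q j| + 1) * |q j| := by rw [hfj]
            _ ≤ p j / (|q j| + 1) * (|q j| + 1) := by
                apply mul_le_mul_of_nonneg_left (by linarith)
                exact div_nonneg (hp0 j) (by positivity)
            _ = p j := div_mul_cancel₀ _ (by positivity)
      -- key positivity
      have hkey : ∀ j, 0 ≤ p j + ε * q j := by
        intro j
        by_cases h : p j = 0
        · rw [h, hq j h]; simp
        · have h1 : ε * q j ≥ -(ε * |q j|) := by
            have := neg_abs_le (q j)
            nlinarith [hε]
          have := hεle j h
          linarith
      have hkey0 : ∀ j, p j = 0 → p j + ε * q j = 0 := by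
        intro j h; rw [h, hq j h]; ring
      -- χ + ε • w ∈ dualFace σ τ
      have hmem : χ + ε • w ∈ dualFace σ τ := by
        constructor
        · intro x hxσ
          have hxσ' := hxσ
          rw [hv] at hxσ'
          obtain ⟨c, hc0, hcx⟩ := hxσ'
          rw [pair_add_smul, hcx, pair_sum, pair_sum]
          rw [Finset.mul_sum, ← Finset.sum_add_distrib]
          refine Finset.sum_nonneg (fun j _ => ?_)
          show 0 ≤ c j * p j + ε * (c j * q j)
          have : c j * p j + ε * (c j * q j) = c j * (p j + ε * q j) := by ring
          rw [this]
          exact mul_nonneg (hc0 j) (hkey j)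
        · intro x hx
          obtain ⟨c, hc0, hcS, hcx⟩ := hdecomp x hx
          rw [pair_add_smul, hcx, pair_sum, pair_sum]
          rw [Finset.mul_sum, ← Finset.sum_add_distrib]
          refine Finset.sum_eq_zero (fun j _ => ?_)
          show c j * p j + ε * (c j * q j) = 0
          by_cases h : p j = 0
          · have : c j * p j + ε * (c j * q j) = c j * (p j + ε * q j) := by ring
            rw [this, hkey0 j h, mul_zero]
          · rw [hcS j h]; ring
      -- conclude w ∈ span
      have h1 : (χ + ε • w) - χ ∈ Submodule.span ℝ (dualFace σ τ) :=
        Submodule.sub_mem _ (Submodule.subset_span hmem) (Submodule.subset_span hχF)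
      have h2 : (χ + ε • w) - χ = ε • w := by abel
      rw [h2] at h1
      have h3 : w = ε⁻¹ • (ε • w) := by
        rw [smul_smul, inv_mul_cancel₀ (ne_of_gt hε), one_smul]
      rw [h3]
      exact Submodule.smul_mem _ _ h1
  rw [hA, hC]
  exact finrank_span_add_finrank_Korth _
end
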